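/- arXiv:math/0609315 — 7 statements merged into one kernel-verified Lean document; each statement's English description precedes it below -/
import Mathlib

section
/- Let p be a prime number. The set {m ∈ M₂(ℚ_p) : m ≠ 0 and det(m) = 0} of nonzero singular 2×2 matrices over ℚ_p is the disjoint union over k ∈ ℤ of the sets Z_k = { u · diag(0, p^k) · v : u ∈ SL₂(ℤ_p), v ∈ GL₂(ℤ_p) }; that is, every nonzero singular m ∈ M₂(ℚ_p) lies in Z_k for exactly one k ∈ ℤ. -/
open Matrix

noncomputable section

variable (p : ℕ) [Fact p.Prime]

/-- A 2×2 matrix over `ℚ_p` has entries in `ℤ_p`. -/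
def IsIntegralMat (A : Matrix (Fin 2) (Fin 2) ℚ_[p]) : Prop :=
  ∀ i j, ‖A i j‖ ≤ 1

/-- Membership in `SL₂(ℤ_p)`, viewed inside `M₂(ℚ_p)`. -/
def IsSL2Zp (A : Matrix (Fin 2) (Fin 2) ℚ_[p]) : Prop :=
  IsIntegralMat p A ∧ A.det = 1

/-- Membership in `GL₂(ℤ_p)`, viewed inside `M₂(ℚ_p)`. -/
def IsGL2Zp (A : Matrix (Fin 2) (Fin 2) ℚ_[p]) : Prop :=
  IsIntegralMat p A ∧ ‖A.det‖ = 1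

/-- The set `Z_k = SL₂(ℤ_p) · diag(0, p^k) · GL₂(ℤ_p)`. -/
def Zset (k : ℤ) : Set (Matrix (Fin 2) (Fin 2) ℚ_[p]) :=
  {m | ∃ u v : Matrix (Fin 2) (Fin 2) ℚ_[p],
    IsSL2Zp p u ∧ IsGL2Zp p v ∧ m = u * !![(0 : ℚ_[p]), 0; 0, (p : ℚ_[p]) ^ k] * v}

namespace ZsetAux

variable {p}

lemma integral_mul {A B : Matrix (Fin 2) (Fin 2) ℚ_[p]}
    (hA : IsIntegralMat p A) (hB : IsIntegralMat p B) : IsIntegralMat p (A * B) := by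
  intro i j
  rw [Matrix.mul_apply, Fin.sum_univ_two]
  refine (Padic.nonarchimedean _ _).trans (max_le ?_ ?_) <;>
  · rw [norm_mul]
    exact mul_le_one₀ (hA _ _) (norm_nonneg _) (hB _ _)

lemma sl2_mul {A B : Matrix (Fin 2) (Fin 2) ℚ_[p]}
    (hA : IsSL2Zp p A) (hB : IsSL2Zp p B) : IsSL2Zp p (A * B) :=
  ⟨integral_mul hA.1 hB.1, by rw [Matrix.det_mul, hA.2, hB.2, one_mul]⟩

lemma gl2_mul {A B : Matrix (Fin 2) (Fin 2) ℚ_[p]}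
    (hA : IsGL2Zp p A) (hB : IsGL2Zp p B) : IsGL2Zp p (A * B) :=
  ⟨integral_mul hA.1 hB.1, by rw [Matrix.det_mul, norm_mul, hA.2, hB.2, one_mul]⟩

lemma entry_eq (u v : Matrix (Fin 2) (Fin 2) ℚ_[p]) (π : ℚ_[p]) (i j : Fin 2) :
    (u * !![(0:ℚ_[p]),0;0,π] * v) i j = u i 1 * (π * v 1 j) := by
  simp [Matrix.mul_apply, Fin.sum_univ_two]
  ring

/-- some entry of column 1 of an element of GL₂(ℤ_p) is a unit -/
lemma exists_col_unit {u : Matrix (Fin 2) (Fin 2) ℚ_[p]}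
    (hu : IsIntegralMat p u) (hdet : ‖u.det‖ = 1) : ∃ i, ‖u i 1‖ = 1 := by
  by_contra h
  push_neg at h
  have h0 : ‖u 0 1‖ < 1 := lt_of_le_of_ne (hu 0 1) (h 0)
  have h1 : ‖u 1 1‖ < 1 := lt_of_le_of_ne (hu 1 1) (h 1)
  have : ‖u.det‖ < 1 := by
    rw [Matrix.det_fin_two, sub_eq_add_neg]
    refine (Padic.nonarchimedean _ _).trans_lt (max_lt ?_ ?_)
    · rw [norm_mul]
      calc ‖u 0 0‖ * ‖u 1 1‖ ≤ 1 * ‖u 1 1‖ := by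
            exact mul_le_mul_of_nonneg_right (hu 0 0) (norm_nonneg _)
        _ < 1 := by rw [one_mul]; exact h1
    · rw [norm_neg, norm_mul]
      calc ‖u 0 1‖ * ‖u 1 0‖ ≤ ‖u 0 1‖ * 1 := by
            exact mul_le_mul_of_nonneg_left (hu 1 0) (norm_nonneg _)
        _ < 1 := by rw [mul_one]; exact h0
  rw [hdet] at this
  exact lt_irrefl _ this

/-- some entry of row 1 of an element of GL₂(ℤ_p) is a unit -/
lemma exists_row_unit {v : Matrix (Fin 2) (Fin 2) ℚ_[p]}
    (hv : IsIntegralMat p v) (hdet : ‖v.det‖ = 1) : ∃ j, ‖v 1 j‖ = 1 := by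
  by_contra h
  push_neg at h
  have h0 : ‖v 1 0‖ < 1 := lt_of_le_of_ne (hv 1 0) (h 0)
  have h1 : ‖v 1 1‖ < 1 := lt_of_le_of_ne (hv 1 1) (h 1)
  have : ‖v.det‖ < 1 := by
    rw [Matrix.det_fin_two, sub_eq_add_neg]
    refine (Padic.nonarchimedean _ _).trans_lt (max_lt ?_ ?_)
    · rw [norm_mul]
      calc ‖v 0 0‖ * ‖v 1 1‖ ≤ 1 * ‖v 1 1‖ := by
            exact mul_le_mul_of_nonneg_right (hv 0 0) (norm_nonneg _)
        _ < 1 := by rw [one_mul]; exact h1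
    · rw [norm_neg, norm_mul]
      calc ‖v 0 1‖ * ‖v 1 0‖ ≤ 1 * ‖v 1 0‖ := by
            exact mul_le_mul_of_nonneg_right (hv 0 1) (norm_nonneg _)
        _ < 1 := by rw [one_mul]; exact h0
  rw [hdet] at this
  exact lt_irrefl _ this

lemma norm_entry_le_of_mem {k : ℤ} {m : Matrix (Fin 2) (Fin 2) ℚ_[p]}
    (h : m ∈ Zset p k) : ∀ i j, ‖m i j‖ ≤ (p : ℝ) ^ (-k) := by
  obtain ⟨u, v, hu, hv, rfl⟩ := h
  intro i j
  rw [entry_eq, norm_mul, norm_mul, Padic.norm_p_zpow]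
  calc ‖u i 1‖ * ((p:ℝ) ^ (-k) * ‖v 1 j‖) ≤ 1 * ((p:ℝ) ^ (-k) * 1) := by
        apply mul_le_mul (hu.1 i 1) _ (by positivity) zero_le_one
        exact mul_le_mul_of_nonneg_left (hv.1 1 j) (by positivity)
    _ = (p:ℝ) ^ (-k) := by ring

lemma exists_norm_entry_eq_of_mem {k : ℤ} {m : Matrix (Fin 2) (Fin 2) ℚ_[p]}
    (h : m ∈ Zset p k) : ∃ i j, ‖m i j‖ = (p : ℝ) ^ (-k) := by
  obtain ⟨u, v, hu, hv, rfl⟩ := h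
  obtain ⟨i, hi⟩ := exists_col_unit hu.1 (by rw [hu.2, norm_one])
  obtain ⟨j, hj⟩ := exists_row_unit hv.1 hv.2
  refine ⟨i, j, ?_⟩
  rw [entry_eq, norm_mul, norm_mul, Padic.norm_p_zpow, hi, hj, one_mul, mul_one]

/-- base case of the existence argument: the (1,1) entry is a unit. -/
lemma exists_uv_of_unit_corner {n : Matrix (Fin 2) (Fin 2) ℚ_[p]}
    (hint : IsIntegralMat p n) (hdet : n.det = 0) (h11 : ‖n 1 1‖ = 1) :
    ∃ u v, IsSL2Zp p u ∧ IsGL2Zp p v ∧ n = u * !![(0:ℚ_[p]),0;0,1] * v := by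
  have hd : n 1 1 ≠ 0 := by
    intro h; rw [h, norm_zero] at h11; norm_num at h11
  refine ⟨!![1, n 0 1 * (n 1 1)⁻¹; 0, 1], !![1, 0; n 1 0, n 1 1], ⟨?_, ?_⟩, ⟨?_, ?_⟩, ?_⟩
  · intro i j
    fin_cases i <;> fin_cases j <;>
      simp only [Fin.zero_eta, Fin.mk_one, Matrix.cons_val', Matrix.cons_val_zero,
        Matrix.cons_val_one, Matrix.head_cons, Matrix.empty_val', Matrix.cons_val_fin_one,
        Matrix.head_fin_const, norm_one, norm_zero, norm_mul, norm_inv, h11] <;>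
      norm_num
    rw [h11, inv_one, mul_one]
    exact hint 0 1
  · simp [Matrix.det_fin_two_of]
  · intro i j
    fin_cases i <;> fin_cases j <;> simp [hint 1 0, hint 1 1]
  · rw [Matrix.det_fin_two_of]
    simp [h11]
  · have hdet2 : n 0 0 * n 1 1 - n 0 1 * n 1 0 = 0 := by
      rw [← Matrix.det_fin_two]; exact hdet
    ext i j
    fin_cases i <;> fin_cases j <;>
      simp [Matrix.mul_apply, Fin.sum_univ_two]
    · field_simp
      linear_combination hdet2
    · field_simp

lemma left_mul_mem {A n : Matrix (Fin 2) (Fin 2) ℚ_[p]} (hA : IsSL2Zp p A)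
    (h : ∃ u v, IsSL2Zp p u ∧ IsGL2Zp p v ∧ n = u * !![(0:ℚ_[p]),0;0,1] * v) :
    ∃ u v, IsSL2Zp p u ∧ IsGL2Zp p v ∧ A * n = u * !![(0:ℚ_[p]),0;0,1] * v := by
  obtain ⟨u, v, hu, hv, rfl⟩ := h
  exact ⟨A * u, v, sl2_mul hA hu, hv, by noncomm_ring⟩

lemma right_mul_mem {B n : Matrix (Fin 2) (Fin 2) ℚ_[p]} (hB : IsGL2Zp p B)
    (h : ∃ u v, IsSL2Zp p u ∧ IsGL2Zp p v ∧ n = u * !![(0:ℚ_[p]),0;0,1] * v) :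
    ∃ u v, IsSL2Zp p u ∧ IsGL2Zp p v ∧ n * B = u * !![(0:ℚ_[p]),0;0,1] * v := by
  obtain ⟨u, v, hu, hv, rfl⟩ := h
  exact ⟨u, v * B, hu, gl2_mul hv hB, by noncomm_ring⟩

lemma S_gl : IsGL2Zp p !![(0:ℚ_[p]),1;1,0] := by
  constructor
  · intro i j; fin_cases i <;> fin_cases j <;> simp
  · rw [Matrix.det_fin_two_of]; simp

lemma T_sl : IsSL2Zp p !![(0:ℚ_[p]),-1;1,0] := by
  constructor
  · intro i j; fin_cases i <;> fin_cases j <;> simp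
  · rw [Matrix.det_fin_two_of]; simp

lemma T'_sl : IsSL2Zp p !![(0:ℚ_[p]),1;-1,0] := by
  constructor
  · intro i j; fin_cases i <;> fin_cases j <;> simp
  · rw [Matrix.det_fin_two_of]; simp

/-- general existence: some entry is a unit -/
lemma exists_uv_of_unit_entry {n : Matrix (Fin 2) (Fin 2) ℚ_[p]}
    (hint : IsIntegralMat p n) (hdet : n.det = 0) {i j : Fin 2} (hij : ‖n i j‖ = 1) :
    ∃ u v, IsSL2Zp p u ∧ IsGL2Zp p v ∧ n = u * !![(0:ℚ_[p]),0;0,1] * v := by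
  -- first move the column
  set S : Matrix (Fin 2) (Fin 2) ℚ_[p] := !![(0:ℚ_[p]),1;1,0] with hS
  set T : Matrix (Fin 2) (Fin 2) ℚ_[p] := !![(0:ℚ_[p]),-1;1,0] with hT
  set T' : Matrix (Fin 2) (Fin 2) ℚ_[p] := !![(0:ℚ_[p]),1;-1,0] with hT'
  have hTT' : T * T' = 1 := by
    rw [hT, hT']
    ext a b
    fin_cases a <;> fin_cases b <;> simp [Matrix.mul_apply, Fin.sum_univ_two]
  have hSS : S * S = 1 := by
    rw [hS]
    ext a b
    fin_cases a <;> fin_cases b <;> simp [Matrix.mul_apply, Fin.sum_univ_two]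
  -- n' : unit entry in column 1
  -- reduce column
  have colstep : ∀ (n : Matrix (Fin 2) (Fin 2) ℚ_[p]), IsIntegralMat p n → n.det = 0 →
      (∃ i, ‖n i 1‖ = 1) →
      ∃ u v, IsSL2Zp p u ∧ IsGL2Zp p v ∧ n = u * !![(0:ℚ_[p]),0;0,1] * v := by
    intro n hint hdet ⟨i, hi⟩
    fin_cases i
    · -- unit at (0,1) : multiply by T' on the left to bring it to (1,1)
      have h1 : T * (T' * n) = n := by rw [← mul_assoc, hTT', one_mul]
      have hTn : IsIntegralMat p (T' * n) := integral_mul T'_sl.1 hint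
      have hTdet : (T' * n).det = 0 := by rw [Matrix.det_mul, hdet, mul_zero]
      have h11 : ‖(T' * n) 1 1‖ = 1 := by
        have : (T' * n) 1 1 = -(n 0 1) := by
          simp [hT', Matrix.mul_apply, Fin.sum_univ_two]
        rw [this, norm_neg]
        exact hi
      have := exists_uv_of_unit_corner hTn hTdet h11
      have := left_mul_mem T_sl this
      rwa [h1] at this
    · exact exists_uv_of_unit_corner hint hdet hi
  fin_cases j
  · -- unit in column 0: multiply by S on the right
    have h1 : (n * S) * S = n := by rw [mul_assoc, hSS, mul_one]
    have hnS : IsIntegralMat p (n * S) := integral_mul hint S_gl.1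
    have hnSdet : (n * S).det = 0 := by rw [Matrix.det_mul, hdet, zero_mul]
    have hcol : ∃ i', ‖(n * S) i' 1‖ = 1 := by
      refine ⟨i, ?_⟩
      have : (n * S) i 1 = n i 0 := by
        simp [hS, Matrix.mul_apply, Fin.sum_univ_two]
      rw [this]
      exact hij
    have := colstep (n * S) hnS hnSdet hcol
    have := right_mul_mem S_gl this
    rwa [h1] at this
  · exact colstep n hint hdet ⟨i, hij⟩

end ZsetAux

/-- every nonzero singular matrix in `M₂(ℚ_p)` lies in `Z_k` for
exactly one `k ∈ ℤ`. -/
theorem nonzero_singular_mem_unique_Zset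
    (m : Matrix (Fin 2) (Fin 2) ℚ_[p]) (hm : m ≠ 0) (hdet : m.det = 0) :
    ∃! k : ℤ, m ∈ Zset p k := by
  classical
  obtain ⟨q, -, hq⟩ := Finset.exists_max_image (Finset.univ : Finset (Fin 2 × Fin 2))
    (fun q => ‖m q.1 q.2‖) ⟨(0, 0), Finset.mem_univ _⟩
  obtain ⟨i, j⟩ := q
  have hne : m i j ≠ 0 := by
    intro h0
    apply hm
    ext a b
    have := hq (a, b) (Finset.mem_univ _)
    simp only [h0, norm_zero] at this
    have : ‖m a b‖ = 0 := le_antisymm this (norm_nonneg _)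
    simpa using norm_eq_zero.mp this
  set k : ℤ := (m i j).valuation with hk
  have hnorm : ‖m i j‖ = (p : ℝ) ^ (-k) := Padic.norm_eq_zpow_neg_valuation hne
  have hp1 : (1 : ℝ) < (p : ℝ) := by
    exact_mod_cast (Fact.out : p.Prime).one_lt
  have hp0 : (0 : ℝ) < (p : ℝ) := lt_trans zero_lt_one hp1
  have hpQ : ((p : ℚ_[p])) ≠ 0 := by
    exact_mod_cast (Nat.cast_ne_zero (R := ℚ_[p])).mpr (Fact.out : p.Prime).ne_zero
  -- Existence
  have hex : m ∈ Zset p k := by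
    set c : ℚ_[p] := (p : ℚ_[p]) ^ (-k) with hc
    have hcnorm : ‖c‖ = (p : ℝ) ^ k := by
      rw [hc, Padic.norm_p_zpow, neg_neg]
    set m' : Matrix (Fin 2) (Fin 2) ℚ_[p] := c • m with hm'
    have hint : IsIntegralMat p m' := by
      intro a b
      rw [hm', Matrix.smul_apply, smul_eq_mul, norm_mul, hcnorm]
      calc (p:ℝ) ^ k * ‖m a b‖ ≤ (p:ℝ) ^ k * (p:ℝ) ^ (-k) := by
            apply mul_le_mul_of_nonneg_left _ (by positivity)
            rw [← hnorm]
            exact hq (a, b) (Finset.mem_univ _)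
        _ = 1 := by rw [← zpow_add₀ (ne_of_gt hp0)]; simp
    have hdet' : m'.det = 0 := by
      rw [hm', Matrix.det_smul, hdet, mul_zero]
    have hij1 : ‖m' i j‖ = 1 := by
      rw [hm', Matrix.smul_apply, smul_eq_mul, norm_mul, hcnorm, hnorm,
        ← zpow_add₀ (ne_of_gt hp0)]
      simp
    obtain ⟨u, v, hu, hv, huv⟩ := ZsetAux.exists_uv_of_unit_entry hint hdet' hij1
    refine ⟨u, v, hu, hv, ?_⟩
    have hcancel : (p : ℚ_[p]) ^ k * c = 1 := by
      rw [hc, ← zpow_add₀ hpQ]; simp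
    have hmm : m = ((p : ℚ_[p]) ^ k) • m' := by
      rw [hm', smul_smul, hcancel, one_smul]
    have hD : ((p : ℚ_[p]) ^ k) • !![(0:ℚ_[p]),0;0,1] = !![(0:ℚ_[p]),0;0,(p:ℚ_[p])^k] := by
      ext a b
      fin_cases a <;> fin_cases b <;> simp
    rw [hmm, huv, ← Matrix.smul_mul, ← Matrix.mul_smul, hD]
  refine ⟨k, hex, ?_⟩
  -- Uniqueness
  intro k' hk'
  obtain ⟨a, b, hab⟩ := ZsetAux.exists_norm_entry_eq_of_mem hk'
  obtain ⟨a', b', hab'⟩ := ZsetAux.exists_norm_entry_eq_of_mem hex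
  have h1 : (p:ℝ) ^ (-k') ≤ (p:ℝ) ^ (-k) := by
    rw [← hab]; exact ZsetAux.norm_entry_le_of_mem hex a b
  have h2 : (p:ℝ) ^ (-k) ≤ (p:ℝ) ^ (-k') := by
    rw [← hab']; exact ZsetAux.norm_entry_le_of_mem hk' a' b'
  have : (p:ℝ) ^ (-k') = (p:ℝ) ^ (-k) := le_antisymm h1 h2
  have := zpow_right_injective₀ hp0 (ne_of_gt hp1) this
  omega

end
end

section
/- Let p be a prime number. Every r ∈ GL₂(ℚ_p) can be written as r = g·k where g is a 2×2 matrix with entries in ℤ[1/p] ⊆ ℚ ⊆ ℚ_p whose determinant equals p^n for some n ∈ ℤ, and k ∈ GL₂(ℤ_p). In other words, GL₂(ℚ_p) = G_p · GL₂(ℤ_p). -/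
open Matrix

noncomputable section

variable (p : ℕ) [Fact p.Prime]

variable {p}

lemma isGL2Zp_mul {A B : Matrix (Fin 2) (Fin 2) ℚ_[p]}
    (hA : IsGL2Zp p A) (hB : IsGL2Zp p B) : IsGL2Zp p (A * B) := by
  refine ⟨fun i j => ?_, ?_⟩
  · rw [Matrix.mul_apply, Fin.sum_univ_two]
    refine le_trans (Padic.nonarchimedean _ _) (max_le ?_ ?_) <;>
      · rw [norm_mul]
        exact mul_le_one₀ (hA.1 _ _) (norm_nonneg _) (hB.1 _ _)
  · rw [Matrix.det_mul, norm_mul, hA.2, hB.2, one_mul]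

/-- density of ℤ[1/p] in ℚ_p -/
lemma exists_near (x : ℚ_[p]) {ε : ℝ} (hε : 0 < ε) :
    ∃ (a : ℤ) (m : ℕ), ‖x - ((a : ℚ_[p]) / (p : ℚ_[p]) ^ m)‖ ≤ ε := by
  have hp1 : (1 : ℝ) < (p : ℝ) := by exact_mod_cast (Fact.out : p.Prime).one_lt
  obtain ⟨m, hm⟩ := pow_unbounded_of_one_lt ‖x‖ hp1
  have hpm : ((p : ℚ_[p]) ^ m) ≠ 0 := pow_ne_zero _ (Nat.cast_ne_zero.mpr (Fact.out : p.Prime).ne_zero)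
  set z : ℚ_[p] := (p : ℚ_[p]) ^ m * x with hz
  have hznorm : ‖z‖ ≤ 1 := by
    rw [hz, norm_mul, Padic.norm_p_pow]
    calc (p:ℝ) ^ (-(m:ℤ)) * ‖x‖ ≤ (p:ℝ) ^ (-(m:ℤ)) * (p:ℝ)^m := by
          exact mul_le_mul_of_nonneg_left hm.le (by positivity)
      _ = 1 := by
          rw [← zpow_natCast (p:ℝ) m, ← zpow_add₀ (by positivity : (p:ℝ) ≠ 0)]
          simp
  have hpow : (0:ℝ) < (p:ℝ) ^ (-(m:ℤ)) := by positivity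
  obtain ⟨a, ha⟩ := PadicInt.denseRange_intCast.exists_dist_lt (⟨z, hznorm⟩ : ℤ_[p])
      (mul_pos hε hpow)
  replace ha := (dist_eq_norm_sub (E := ℤ_[p]) _ _).symm.trans_lt ha
  have ha' : ‖z - (a : ℚ_[p])‖ < ε * (p:ℝ) ^ (-(m:ℤ)) := by
    have : ((⟨z, hznorm⟩ - (a : ℤ_[p]) : ℤ_[p]) : ℚ_[p]) = z - (a : ℚ_[p]) := by
      push_cast
      rfl
    rwa [PadicInt.norm_def, this] at ha
  refine ⟨a, m, ?_⟩
  have key : x - (a : ℚ_[p]) / (p : ℚ_[p]) ^ m = (z - a) / (p : ℚ_[p]) ^ m := by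
    rw [hz]; field_simp
  rw [key, norm_div, Padic.norm_p_pow]
  rw [div_le_iff₀ hpow]
  exact ha'.le

lemma zpow_frac (v : ℤ) : ∃ (x : ℤ) (m : ℕ), (p : ℚ) ^ v = (x : ℚ) / (p : ℚ) ^ m := by
  have hp : (p : ℚ) ≠ 0 := Nat.cast_ne_zero.mpr (Fact.out : p.Prime).ne_zero
  have h0 : (0 : ℤ) ≤ v + v.natAbs := by omega
  refine ⟨(p : ℤ) ^ (v + v.natAbs).toNat, v.natAbs, ?_⟩
  have h1 : (((p : ℤ) ^ (v + v.natAbs).toNat : ℤ) : ℚ) = (p : ℚ) ^ ((v + v.natAbs).toNat) := by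
    push_cast
    rfl
  rw [h1, ← zpow_natCast (p : ℚ) ((v + v.natAbs).toNat), Int.toNat_of_nonneg h0,
    zpow_add₀ hp, zpow_natCast]
  field_simp

lemma tri (a b d : ℚ_[p]) (ha : a ≠ 0) (hd : d ≠ 0) :
    ∃ (g : Matrix (Fin 2) (Fin 2) ℚ) (n : ℤ) (k : Matrix (Fin 2) (Fin 2) ℚ_[p]),
      (∀ i j, ∃ (x : ℤ) (m : ℕ), g i j = (x : ℚ) / (p : ℚ) ^ m) ∧
      g.det = (p : ℚ) ^ n ∧ IsGL2Zp p k ∧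
      !![a, b; 0, d] = g.map ((↑) : ℚ → ℚ_[p]) * k := by
  have hp0 : (p : ℚ_[p]) ≠ 0 := Nat.cast_ne_zero.mpr (Fact.out : p.Prime).ne_zero
  have hpq : (p : ℚ) ≠ 0 := Nat.cast_ne_zero.mpr (Fact.out : p.Prime).ne_zero
  set va := a.valuation with hva
  set vd := d.valuation with hvd
  set Pp : ℚ_[p] := (p : ℚ_[p]) ^ va with hPpdef
  set Qp : ℚ_[p] := (p : ℚ_[p]) ^ vd with hQpdef
  have hPp : Pp ≠ 0 := zpow_ne_zero _ hp0
  have hQp : Qp ≠ 0 := zpow_ne_zero _ hp0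
  have hnPp : ‖Pp‖ = (p : ℝ) ^ (-va) := Padic.norm_p_zpow va
  have hnQp : ‖Qp‖ = (p : ℝ) ^ (-vd) := Padic.norm_p_zpow vd
  have hua : ‖a / Pp‖ = 1 := by
    rw [norm_div, Padic.norm_eq_zpow_neg_valuation ha, hnPp, ← hva, div_self (zpow_ne_zero _ (by exact_mod_cast (Fact.out : p.Prime).pos.ne' : (p:ℝ) ≠ 0))]
  have hud : ‖d / Qp‖ = 1 := by
    rw [norm_div, Padic.norm_eq_zpow_neg_valuation hd, hnQp, ← hvd, div_self (zpow_ne_zero _ (by exact_mod_cast (Fact.out : p.Prime).pos.ne' : (p:ℝ) ≠ 0))]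
  have hεpos : (0 : ℝ) < ‖Pp‖ := norm_pos_iff.mpr hPp
  obtain ⟨x, m, hβ⟩ := exists_near (b * Qp / d) hεpos
  set β : ℚ_[p] := (x : ℚ_[p]) / (p : ℚ_[p]) ^ m with hβdef
  set βq : ℚ := (x : ℚ) / (p : ℚ) ^ m with hβqdef
  have hβcast : ((βq : ℚ) : ℚ_[p]) = β := by rw [hβqdef, hβdef]; push_cast; rfl
  refine ⟨!![(p:ℚ) ^ va, βq; 0, (p:ℚ) ^ vd], va + vd,
      !![a / Pp, (b - β * (d / Qp)) / Pp; 0, d / Qp], ?_, ?_, ⟨?_, ?_⟩, ?_⟩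
  · intro i j
    fin_cases i <;> fin_cases j
    · simpa using zpow_frac (p := p) va
    · exact ⟨x, m, rfl⟩
    · exact ⟨0, 0, by simp⟩
    · simpa using zpow_frac (p := p) vd
  · rw [Matrix.det_fin_two_of, zpow_add₀ hpq]
    ring
  · intro i j
    fin_cases i <;> fin_cases j
    · simpa using hua.le
    · show ‖(b - β * (d / Qp)) / Pp‖ ≤ 1
      have key : b - β * (d / Qp) = (b * Qp / d - β) * (d / Qp) := by
        field_simp
      rw [norm_div, key, norm_mul, hud, mul_one, div_le_one hεpos]
      exact hβ
    · simp
    · simpa using hud.le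
  · rw [Matrix.det_fin_two_of, mul_zero, sub_zero, norm_mul, hua, hud, one_mul]
  · have hmap : (!![(p:ℚ) ^ va, βq; 0, (p:ℚ) ^ vd]).map ((↑) : ℚ → ℚ_[p])
        = !![Pp, β; 0, Qp] := by
      ext i j
      fin_cases i <;> fin_cases j <;>
        simp [hPpdef, hQpdef, ← hβcast] <;> push_cast <;> ring
    rw [hmap, Matrix.mul_fin_two]
    ext i j
    fin_cases i <;> fin_cases j <;> simp
    · field_simp
    · field_simp
      ring
    · field_simp

variable (p)

lemma main_aux (r : Matrix (Fin 2) (Fin 2) ℚ_[p]) (hr : r.det ≠ 0)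
    (h11 : r 1 1 ≠ 0) (hle : ‖r 1 0‖ ≤ ‖r 1 1‖) :
    ∃ (g : Matrix (Fin 2) (Fin 2) ℚ) (n : ℤ) (k : Matrix (Fin 2) (Fin 2) ℚ_[p]),
      (∀ i j, ∃ (a : ℤ) (m : ℕ), g i j = (a : ℚ) / (p : ℚ) ^ m) ∧
      g.det = (p : ℚ) ^ n ∧
      IsGL2Zp p k ∧
      r = g.map ((↑) : ℚ → ℚ_[p]) * k := by
  set w : Matrix (Fin 2) (Fin 2) ℚ_[p] := !![1, 0; -(r 1 0 / r 1 1), 1] with hwdef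
  set w' : Matrix (Fin 2) (Fin 2) ℚ_[p] := !![1, 0; r 1 0 / r 1 1, 1] with hw'def
  have hww' : w * w' = 1 := by
    rw [hwdef, hw'def, Matrix.mul_fin_two]
    norm_num
    exact Matrix.one_fin_two.symm
  have hw' : IsGL2Zp p w' := by
    refine ⟨fun i j => ?_, ?_⟩
    · fin_cases i <;> fin_cases j <;> simp [hw'def]
      exact div_le_one_of_le₀ hle (norm_nonneg _)
    · rw [hw'def, Matrix.det_fin_two_of]
      norm_num
  set A : ℚ_[p] := r 0 0 - r 0 1 * (r 1 0 / r 1 1) with hAdef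
  have hteq : r * w = !![A, r 0 1; 0, r 1 1] := by
    ext i j
    fin_cases i <;> fin_cases j <;>
      simp [Matrix.mul_apply, Fin.sum_univ_two, hwdef, hAdef] <;> field_simp <;> ring
  have hdetw : w.det = 1 := by rw [hwdef, Matrix.det_fin_two_of]; ring
  have hdett : (r * w).det ≠ 0 := by rw [Matrix.det_mul, hdetw, mul_one]; exact hr
  have hA : A ≠ 0 := by
    intro h0
    apply hdett
    rw [hteq, Matrix.det_fin_two_of, h0]
    ring
  obtain ⟨g, n, k, h1, h2, h3, h4⟩ := tri A (r 0 1) (r 1 1) hA h11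
  refine ⟨g, n, k * w', h1, h2, isGL2Zp_mul h3 hw', ?_⟩
  have : r = (r * w) * w' := by rw [mul_assoc, hww', mul_one]
  rw [this, hteq, h4, mul_assoc]

/-- `GL₂(ℚ_p) = G_p · GL₂(ℤ_p)`: every invertible matrix over `ℚ_p`
is the product of a rational matrix with entries in `ℤ[1/p]` and determinant an
integer power of `p`, and an element of `GL₂(ℤ_p)`. -/
theorem GL2Qp_eq_Gp_mul_GL2Zp
    (r : Matrix (Fin 2) (Fin 2) ℚ_[p]) (hr : r.det ≠ 0) :
    ∃ (g : Matrix (Fin 2) (Fin 2) ℚ) (n : ℤ) (k : Matrix (Fin 2) (Fin 2) ℚ_[p]),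
      (∀ i j, ∃ (a : ℤ) (m : ℕ), g i j = (a : ℚ) / (p : ℚ) ^ m) ∧
      g.det = (p : ℚ) ^ n ∧
      IsGL2Zp p k ∧
      r = g.map ((↑) : ℚ → ℚ_[p]) * k := by
  by_cases hle : ‖r 1 0‖ ≤ ‖r 1 1‖
  · have h11 : r 1 1 ≠ 0 := by
      intro h0
      have h10 : r 1 0 = 0 := by
        rw [h0] at hle
        simpa using norm_le_zero_iff.mp (by simpa using hle)
      apply hr
      rw [Matrix.det_fin_two, h0, h10]
      ring
    exact main_aux p r hr h11 hle
  · push_neg at hle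
    set S : Matrix (Fin 2) (Fin 2) ℚ_[p] := !![0, 1; 1, 0] with hSdef
    have hS : IsGL2Zp p S := by
      refine ⟨fun i j => ?_, ?_⟩
      · fin_cases i <;> fin_cases j <;> simp [hSdef]
      · rw [hSdef, Matrix.det_fin_two_of]
        norm_num
    have hSS : S * S = 1 := by
      rw [hSdef, Matrix.mul_fin_two]
      norm_num
      exact Matrix.one_fin_two.symm
    have hrS : (r * S).det ≠ 0 := by
      rw [Matrix.det_mul]
      simp [hSdef, Matrix.det_fin_two_of]
      exact hr
    have e10 : (r * S) 1 0 = r 1 1 := by simp [Matrix.mul_apply, Fin.sum_univ_two, hSdef]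
    have e11 : (r * S) 1 1 = r 1 0 := by simp [Matrix.mul_apply, Fin.sum_univ_two, hSdef]
    have h11' : (r * S) 1 1 ≠ 0 := by
      rw [e11]
      intro h0
      rw [h0] at hle
      simp at hle
      exact absurd hle (norm_nonneg _).not_gt
    obtain ⟨g, n, k, h1, h2, h3, h4⟩ :=
      main_aux p (r * S) hrS h11' (by rw [e10, e11]; exact hle.le)
    refine ⟨g, n, k * S, h1, h2, isGL2Zp_mul h3 hS, ?_⟩
    have : r = (r * S) * S := by rw [mul_assoc, hSS, mul_one]
    rw [this, h4, mul_assoc]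


end
end

section
/- Let p be a prime number and S_p = {m ∈ M₂(ℤ) : det(m) = p^k for some integer k ≥ 0}. The group Γ = SL₂(ℤ) acts on S_p by left multiplication and det is constant on Γ-orbits. For real β, the sum Σ det(s)^(−β) over a set of representatives s of the Γ-orbits in S_p is summable if and only if β > 1, and for β > 1 its value is (1 − p^(−β))^(−1) · (1 − p^(1−β))^(−1). -/
open Matrix

noncomputable section

/-- The semigroup `S_p` of integer 2×2 matrices whose determinant is a
nonnegative power of `p`. -/
def Sp (p : ℕ) : Set (Matrix (Fin 2) (Fin 2) ℤ) :=
  {m | ∃ k : ℕ, m.det = (p : ℤ) ^ k}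



/-- Hermite normal form existence for 2×2 integer matrices of positive determinant. -/
lemma hnf_exists (A : Matrix (Fin 2) (Fin 2) ℤ) (hA : 0 < A.det) :
    ∃ γ : Matrix.SpecialLinearGroup (Fin 2) ℤ, ∃ a d b : ℤ,
      0 < a ∧ 0 < d ∧ 0 ≤ b ∧ b < d ∧ (γ : Matrix (Fin 2) (Fin 2) ℤ) * A = !![a, b; 0, d] := by
  set x := A 0 0 with hx
  set z := A 1 0 with hz
  have hxz : ¬(x = 0 ∧ z = 0) := by
    rintro ⟨h1, h2⟩
    rw [Matrix.det_fin_two] at hA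
    rw [hx] at h1; rw [hz] at h2
    rw [h1, h2] at hA
    simp at hA
  set g : ℤ := ↑(Int.gcd x z) with hg
  have hgpos : 0 < g := by
    have := Int.gcd_pos_iff (a := x) (b := z)
    rw [hg]
    exact_mod_cast this.mpr (by tauto)
  have hgx : g ∣ x := Int.gcd_dvd_left x z
  have hgz : g ∣ z := Int.gcd_dvd_right x z
  have hbezout : x * Int.gcdA x z + z * Int.gcdB x z = g := (Int.gcd_eq_gcd_ab x z).symm
  set u := Int.gcdA x z
  set v := Int.gcdB x z
  have hxg : g * (x / g) = x := Int.mul_ediv_cancel' hgx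
  have hzg : g * (z / g) = z := Int.mul_ediv_cancel' hgz
  set γ₁m : Matrix (Fin 2) (Fin 2) ℤ := !![u, v; -(z / g), x / g] with hγ₁m
  have hdet1 : γ₁m.det = 1 := by
    rw [hγ₁m, Matrix.det_fin_two_of]
    have h2 : g * (u * (x / g) - v * -(z / g)) = g * 1 := by
      linear_combination u * hxg + v * hzg + hbezout
    exact mul_left_cancel₀ (ne_of_gt hgpos) h2
  set γ₁ : Matrix.SpecialLinearGroup (Fin 2) ℤ := ⟨γ₁m, hdet1⟩
  set B := γ₁m * A with hB
  have hB00 : B 0 0 = g := by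
    rw [hB, hγ₁m, Matrix.eta_fin_two A, Matrix.mul_fin_two]
    show u * x + v * z = g
    linarith [hbezout]
  have hB10 : B 1 0 = 0 := by
    rw [hB, hγ₁m, Matrix.eta_fin_two A, Matrix.mul_fin_two]
    show -(z / g) * x + x / g * z = 0
    have h3 : g * (-(z / g) * x + x / g * z) = 0 := by
      linear_combination z * hxg - x * hzg
    exact mul_left_cancel₀ (ne_of_gt hgpos) (by simpa using h3)
  have hdetB : B.det = A.det := by rw [hB, Matrix.det_mul, hdet1, one_mul]
  set d := B 1 1 with hd
  have hdpos : 0 < d := by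
    have h4 : B.det = g * d := by
      rw [Matrix.det_fin_two, hB00, hB10, ← hd]; ring
    nlinarith [hdetB, h4, hA]
  set b0 := B 0 1 with hb0
  set t := -(b0 / d) with ht
  set γ₂m : Matrix (Fin 2) (Fin 2) ℤ := !![1, t; 0, 1] with hγ₂m
  have hdet2 : γ₂m.det = 1 := by rw [hγ₂m, Matrix.det_fin_two_of]; ring
  refine ⟨(show Matrix.SpecialLinearGroup (Fin 2) ℤ from ⟨γ₂m, hdet2⟩) * γ₁, g, d, b0 % d, hgpos, hdpos,
    Int.emod_nonneg _ (ne_of_gt hdpos), Int.emod_lt_of_pos _ hdpos, ?_⟩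
  have hassoc : (γ₂m * γ₁m) * A = γ₂m * B := by rw [hB, Matrix.mul_assoc]
  rw [Matrix.SpecialLinearGroup.coe_mul]
  show γ₂m * γ₁m * A = _
  rw [hassoc, Matrix.eta_fin_two B, hγ₂m, Matrix.mul_fin_two, hB00, hB10, ← hd, ← hb0]
  have hmod : 1 * b0 + t * d = b0 % d := by
    rw [ht, Int.emod_def]; ring
  rw [hmod]
  norm_num

lemma hnf_unique (γ : Matrix.SpecialLinearGroup (Fin 2) ℤ) (a d b a' d' b' : ℤ)
    (ha : 0 < a) (hd : 0 < d) (hb : 0 ≤ b) (hbd : b < d)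
    (ha' : 0 < a') (hd' : 0 < d') (hb' : 0 ≤ b') (hbd' : b' < d')
    (h : (γ : Matrix (Fin 2) (Fin 2) ℤ) * !![a, b; 0, d] = !![a', b'; 0, d']) :
    a = a' ∧ d = d' ∧ b = b' := by
  set e := (γ : Matrix (Fin 2) (Fin 2) ℤ) 0 0 with he
  set f := (γ : Matrix (Fin 2) (Fin 2) ℤ) 0 1 with hf
  set g := (γ : Matrix (Fin 2) (Fin 2) ℤ) 1 0 with hg
  set k := (γ : Matrix (Fin 2) (Fin 2) ℤ) 1 1 with hk
  have hdet : e * k - f * g = 1 := by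
    have := Matrix.SpecialLinearGroup.det_coe γ
    rw [Matrix.det_fin_two] at this
    linarith [this]
  rw [Matrix.eta_fin_two (γ : Matrix (Fin 2) (Fin 2) ℤ), Matrix.mul_fin_two] at h
  rw [← he, ← hf, ← hg, ← hk] at h
  have h00 : e * a + f * 0 = a' := by have := (Matrix.ext_iff.2 h) 0 0; simpa using this
  have h01 : e * b + f * d = b' := by have := (Matrix.ext_iff.2 h) 0 1; simpa using this
  have h10 : g * a + k * 0 = 0 := by have := (Matrix.ext_iff.2 h) 1 0; simpa using this
  have h11 : g * b + k * d = d' := by have := (Matrix.ext_iff.2 h) 1 1; simpa using this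
  have hg0 : g = 0 := by
    have : g * a = 0 := by linarith
    rcases mul_eq_zero.1 this with h' | h'
    · exact h'
    · omega
  rw [hg0] at hdet h11
  have hek : e * k = 1 := by linarith
  have he1 : e = 1 := by
    have hepos : 0 < e := by nlinarith
    have := Int.eq_one_of_mul_eq_one_right (le_of_lt hepos) hek
    exact this
  have hk1 : k = 1 := by rw [he1] at hek; linarith
  rw [he1] at h00 h01
  rw [hk1] at h11
  have hdd : d = d' := by linarith
  have haa : a = a' := by linarith
  refine ⟨haa, hdd, ?_⟩
  -- b' = b + f * d with 0 ≤ b, b' < d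
  have hf0 : f = 0 := by nlinarith [h01]
  rw [hf0] at h01; linarith


/-- index type for orbit representatives: `(j, m, b)` with `b < p^j` encodes
`!![p^m, b; 0, p^j]`. -/
def IdxP (p : ℕ) := Σ jm : ℕ × ℕ, Fin (p ^ jm.1)

def MatP (p : ℕ) (i : IdxP p) : Matrix (Fin 2) (Fin 2) ℤ :=
  !![(p : ℤ) ^ i.1.2, (i.2 : ℤ); 0, (p : ℤ) ^ i.1.1]

lemma detMatP (p : ℕ) (i : IdxP p) : (MatP p i).det = (p : ℤ) ^ (i.1.1 + i.1.2) := by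
  rw [MatP, Matrix.det_fin_two_of]
  ring

lemma MatP_memSp (p : ℕ) (i : IdxP p) : MatP p i ∈ Sp p := ⟨i.1.1 + i.1.2, detMatP p i⟩

/-- every matrix in `S_p` is equivalent to some `MatP`. -/
lemma exists_idx (p : ℕ) (hp : p.Prime) (A : Matrix (Fin 2) (Fin 2) ℤ) (hA : A ∈ Sp p) :
    ∃ γ : Matrix.SpecialLinearGroup (Fin 2) ℤ, ∃ i : IdxP p,
      (γ : Matrix (Fin 2) (Fin 2) ℤ) * A = MatP p i := by
  obtain ⟨k, hk⟩ := hA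
  have hppos : (0:ℤ) < (p:ℤ) := by exact_mod_cast hp.pos
  have hdet : 0 < A.det := by
    rw [hk]; positivity
  obtain ⟨γ, a, d, b, hapos, hdpos, hb0, hbd, hγ⟩ := hnf_exists A hdet
  have hdet2 : a * d = (p : ℤ) ^ k := by
    have : ((γ : Matrix (Fin 2) (Fin 2) ℤ) * A).det = A.det := by
      rw [Matrix.det_mul, Matrix.SpecialLinearGroup.det_coe, one_mul]
    rw [hγ, Matrix.det_fin_two_of] at this
    rw [hk] at this; linarith
  -- a, d are powers of p
  have hdvd : d.natAbs ∣ p ^ k := by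
    have : (d.natAbs : ℤ) ∣ (p : ℤ) ^ k := by
      rw [Int.natAbs_dvd]
      exact Dvd.intro_left a hdet2
    exact_mod_cast this
  obtain ⟨j, hjk, hdj⟩ := (Nat.dvd_prime_pow hp).1 hdvd
  have hdj' : d = (p : ℤ) ^ j := by
    have := Int.natAbs_of_nonneg (le_of_lt hdpos)
    rw [← this, hdj]; push_cast; ring
  have haj' : a = (p : ℤ) ^ (k - j) := by
    have hppos : (0:ℤ) < (p:ℤ) ^ j := by positivity
    have : a * (p:ℤ)^j = (p:ℤ)^(k-j) * (p:ℤ)^j := by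
      rw [← pow_add, Nat.sub_add_cancel hjk, ← hdet2, hdj']
    exact mul_right_cancel₀ (ne_of_gt hppos) this
  have hbfin : b.toNat < p ^ j := by
    have h1 : b < ((p ^ j : ℕ) : ℤ) := by push_cast; rw [← hdj']; exact hbd
    omega
  refine ⟨γ, ⟨⟨j, k - j⟩, ⟨b.toNat, hbfin⟩⟩, ?_⟩
  rw [hγ]; unfold MatP
  have : ((b.toNat : ℤ)) = b := Int.toNat_of_nonneg hb0
  simp only []
  rw [this, ← haj', ← hdj']

lemma idx_unique (p : ℕ) (hp : p.Prime) (γ : Matrix.SpecialLinearGroup (Fin 2) ℤ)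
    (i i' : IdxP p) (h : (γ : Matrix (Fin 2) (Fin 2) ℤ) * MatP p i = MatP p i') : i = i' := by
  obtain ⟨⟨j, m⟩, b⟩ := i
  obtain ⟨⟨j', m'⟩, b'⟩ := i'
  have hppos : (0:ℤ) < (p:ℤ) := by exact_mod_cast hp.pos
  have h1 : ((p:ℤ)^m = (p:ℤ)^m') ∧ ((p:ℤ)^j = (p:ℤ)^j') ∧ ((b:ℤ) = (b':ℤ)) := by
    refine hnf_unique γ _ _ _ _ _ _ (by positivity) (by positivity)
      (by exact_mod_cast Nat.zero_le _) ?_ (by positivity) (by positivity)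
      (by exact_mod_cast Nat.zero_le _) ?_ h
    · exact_mod_cast b.isLt
    · exact_mod_cast b'.isLt
  obtain ⟨hm, hj, hb⟩ := h1
  have hp2 : 2 ≤ p := hp.two_le
  have hmm : m = m' := by
    have : (p:ℤ)^m = (p:ℤ)^m' := hm
    have h2 : p^m = p^m' := by exact_mod_cast this
    exact Nat.pow_right_injective hp2 h2
  have hjj : j = j' := by
    have : (p:ℤ)^j = (p:ℤ)^j' := hj
    have h2 : p^j = p^j' := by exact_mod_cast this
    exact Nat.pow_right_injective hp2 h2
  subst hmm; subst hjj
  have : b = b' := by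
    apply Fin.ext
    exact_mod_cast hb
  rw [this]


lemma sl_inv_coe (γ : Matrix.SpecialLinearGroup (Fin 2) ℤ) :
    ((γ⁻¹ : Matrix.SpecialLinearGroup (Fin 2) ℤ) : Matrix (Fin 2) (Fin 2) ℤ) *
      (γ : Matrix (Fin 2) (Fin 2) ℤ) = 1 := by
  rw [← Matrix.SpecialLinearGroup.coe_mul γ⁻¹ γ, inv_mul_cancel]
  rfl


set_option maxHeartbeats 1600000 in
/-- `det` is constant on the `SL₂(ℤ)`-orbits in `S_p`, and for a
set `R` of representatives of these orbits, `Σ_{s ∈ R} det(s)^{-β}` is summable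
iff `β > 1`, in which case it equals `(1 - p^{-β})⁻¹ (1 - p^{1-β})⁻¹`. -/
theorem zeta_Sp (p : ℕ) (hp : p.Prime) (β : ℝ)
    (R : Set (Matrix (Fin 2) (Fin 2) ℤ)) (hRS : R ⊆ Sp p)
    (hrep : ∀ m ∈ Sp p, ∃! r, r ∈ R ∧
      ∃ γ : Matrix.SpecialLinearGroup (Fin 2) ℤ, (γ : Matrix (Fin 2) (Fin 2) ℤ) * m = r) :
    (∀ (γ : Matrix.SpecialLinearGroup (Fin 2) ℤ) (m : Matrix (Fin 2) (Fin 2) ℤ),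
      ((γ : Matrix (Fin 2) (Fin 2) ℤ) * m).det = m.det) ∧
    ((Summable fun r : R => ((r : Matrix (Fin 2) (Fin 2) ℤ).det : ℝ) ^ (-β)) ↔ 1 < β) ∧
    (1 < β →
      ∑' r : R, ((r : Matrix (Fin 2) (Fin 2) ℤ).det : ℝ) ^ (-β) =
        (1 - (p : ℝ) ^ (-β))⁻¹ * (1 - (p : ℝ) ^ (1 - β))⁻¹) := by
  have hdetinv : ∀ (γ : Matrix.SpecialLinearGroup (Fin 2) ℤ) (m : Matrix (Fin 2) (Fin 2) ℤ),
      ((γ : Matrix (Fin 2) (Fin 2) ℤ) * m).det = m.det := fun γ m => by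
    rw [Matrix.det_mul, Matrix.SpecialLinearGroup.det_coe, one_mul]
  refine ⟨hdetinv, ?_⟩
  have hp1 : (1:ℝ) < (p:ℝ) := by exact_mod_cast hp.one_lt
  have hppR : (0:ℝ) < (p:ℝ) := lt_trans one_pos hp1
  set φ : IdxP p → Matrix (Fin 2) (Fin 2) ℤ :=
    fun i => (hrep (MatP p i) (MatP_memSp p i)).choose with hφdef
  have hφspec : ∀ i : IdxP p, (φ i ∈ R ∧
      ∃ γ : Matrix.SpecialLinearGroup (Fin 2) ℤ, (γ : Matrix (Fin 2) (Fin 2) ℤ) * MatP p i = φ i) ∧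
      ∀ y, (y ∈ R ∧ ∃ γ : Matrix.SpecialLinearGroup (Fin 2) ℤ,
        (γ : Matrix (Fin 2) (Fin 2) ℤ) * MatP p i = y) → y = φ i :=
    fun i => (hrep (MatP p i) (MatP_memSp p i)).choose_spec
  set E : IdxP p → R := fun i => ⟨φ i, (hφspec i).1.1⟩ with hEdef
  have hEinj : Function.Injective E := by
    intro i i' h
    have hφeq : φ i = φ i' := congrArg Subtype.val h
    obtain ⟨γ, hγ⟩ := (hφspec i).1.2
    obtain ⟨γ', hγ'⟩ := (hφspec i').1.2
    apply idx_unique p hp (γ'⁻¹ * γ)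
    rw [Matrix.SpecialLinearGroup.coe_mul, Matrix.mul_assoc, hγ, hφeq, ← hγ',
      ← Matrix.mul_assoc, sl_inv_coe, Matrix.one_mul]
  have hEsurj : Function.Surjective E := by
    rintro ⟨r, hr⟩
    obtain ⟨γ, i, hγ⟩ := exists_idx p hp r (hRS hr)
    refine ⟨i, ?_⟩
    have hr' : r ∈ R ∧ ∃ δ : Matrix.SpecialLinearGroup (Fin 2) ℤ,
        (δ : Matrix (Fin 2) (Fin 2) ℤ) * MatP p i = r := by
      refine ⟨hr, γ⁻¹, ?_⟩
      rw [← hγ, ← Matrix.mul_assoc, sl_inv_coe, Matrix.one_mul]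
    exact Subtype.ext ((hφspec i).2 r hr').symm
  set EQ : IdxP p ≃ R := Equiv.ofBijective E ⟨hEinj, hEsurj⟩ with hEQ
  set f : R → ℝ := fun r => ((r : Matrix (Fin 2) (Fin 2) ℤ).det : ℝ) ^ (-β) with hfdef
  set r1 : ℝ := (p:ℝ) ^ (1 - β) with hr1
  set r2 : ℝ := (p:ℝ) ^ (-β) with hr2
  have hr1pos : 0 < r1 := Real.rpow_pos_of_pos hppR _
  have hr2pos : 0 < r2 := Real.rpow_pos_of_pos hppR _
  have hfE : ∀ i : IdxP p, f (EQ i) = (p:ℝ) ^ (((i.1.1 : ℝ) + (i.1.2 : ℝ)) * (-β)) := by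
    intro i
    have hdet : ((EQ i : Matrix (Fin 2) (Fin 2) ℤ)).det = (p:ℤ) ^ (i.1.1 + i.1.2) := by
      obtain ⟨γ, hγ⟩ := (hφspec i).1.2
      show (φ i).det = _
      rw [← hγ, hdetinv, detMatP]
    rw [hfdef]
    show (((EQ i : Matrix (Fin 2) (Fin 2) ℤ)).det : ℝ) ^ (-β) = _
    rw [hdet]
    push_cast
    rw [← Real.rpow_natCast (p:ℝ) (i.1.1 + i.1.2), ← Real.rpow_mul (le_of_lt hppR)]
    congr 1
    push_cast
    ring
  have hfiber : ∀ jm : ℕ × ℕ, ∑' b : Fin (p ^ jm.1), f (EQ ⟨jm, b⟩) = r1 ^ jm.1 * r2 ^ jm.2 := by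
    intro jm
    rw [tsum_fintype]
    have hv : ∀ b : Fin (p ^ jm.1), f (EQ ⟨jm, b⟩) = (p:ℝ) ^ (((jm.1 : ℝ) + (jm.2 : ℝ)) * (-β)) :=
      fun b => hfE ⟨jm, b⟩
    rw [Finset.sum_congr rfl (fun b _ => hv b), Finset.sum_const, Finset.card_univ,
      Fintype.card_fin, nsmul_eq_mul]
    push_cast
    rw [hr1, hr2,
      ← Real.rpow_natCast ((p:ℝ) ^ (1-β)) jm.1, ← Real.rpow_natCast ((p:ℝ) ^ (-β)) jm.2,
      ← Real.rpow_natCast (p:ℝ) jm.1,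
      ← Real.rpow_mul (le_of_lt hppR), ← Real.rpow_mul (le_of_lt hppR),
      ← Real.rpow_add hppR, ← Real.rpow_add hppR]
    congr 1
    ring
  have hnn : ∀ i : IdxP p, 0 ≤ f (EQ i) := fun i => by
    rw [hfE i]; exact Real.rpow_nonneg (le_of_lt hppR) _
  set F : ℕ × ℕ → ℝ := fun jm => r1 ^ jm.1 * r2 ^ jm.2 with hFdef
  have hsum_iff : (Summable f) ↔ Summable F := by
    constructor
    · intro h
      have h2 : Summable (fun i : IdxP p => f (EQ i)) := (EQ.summable_iff).2 h
      have h3 := (summable_sigma_of_nonneg hnn).1 h2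
      exact (summable_congr (fun jm => (hfiber jm))).1 h3.2
    · intro h
      have h3 : Summable (fun i : IdxP p => f (EQ i)) :=
        (summable_sigma_of_nonneg hnn).2
          ⟨fun jm => Summable.of_finite, (summable_congr (fun jm => (hfiber jm))).2 h⟩
      exact (EQ.summable_iff).1 h3
  have hFiff : Summable F ↔ 1 < β := by
    constructor
    · intro h
      have h1 : Summable (fun j : ℕ => F (j, 0)) :=
        h.comp_injective (fun a b hab => by simpa using congrArg Prod.fst hab)
      have h2 : Summable (fun j : ℕ => r1 ^ j) := by
        simpa [hFdef] using h1
      have h3 : r1 < 1 := by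
        have := summable_geometric_iff_norm_lt_one.1 h2
        rwa [Real.norm_eq_abs, abs_of_pos hr1pos] at this
      by_contra hb
      push_neg at hb
      have : (p:ℝ) ^ (0:ℝ) ≤ (p:ℝ) ^ (1 - β) :=
        (Real.rpow_le_rpow_left_iff hp1).2 (by linarith)
      rw [Real.rpow_zero] at this
      rw [hr1] at h3
      linarith
    · intro hb
      have h1 : r1 < 1 := Real.rpow_lt_one_of_one_lt_of_neg hp1 (by linarith)
      have h2 : r2 < 1 := Real.rpow_lt_one_of_one_lt_of_neg hp1 (by linarith)
      exact (summable_geometric_of_lt_one hr1pos.le h1).mul_of_nonneg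
        (summable_geometric_of_lt_one hr2pos.le h2)
        (fun j => pow_nonneg hr1pos.le j) (fun m => pow_nonneg hr2pos.le m)
  constructor
  · exact hsum_iff.trans hFiff
  · intro hb
    have hFsum : Summable F := hFiff.2 hb
    have hfsum : Summable f := hsum_iff.2 hFsum
    have h1 : r1 < 1 := Real.rpow_lt_one_of_one_lt_of_neg hp1 (by linarith)
    have h2 : r2 < 1 := Real.rpow_lt_one_of_one_lt_of_neg hp1 (by linarith)
    have hstep1 : ∑' r : R, f r = ∑' i : IdxP p, f (EQ i) := (EQ.tsum_eq f).symm
    have hsumI : Summable (fun i : IdxP p => f (EQ i)) := (EQ.summable_iff).2 hfsum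
    have hstep2 : ∑' i : IdxP p, f (EQ i)
        = ∑' jm : ℕ × ℕ, ∑' b : Fin (p ^ jm.1), f (EQ ⟨jm, b⟩) := Summable.tsum_sigma hsumI
    have hstep3 : ∑' jm : ℕ × ℕ, ∑' b : Fin (p ^ jm.1), f (EQ ⟨jm, b⟩) = ∑' jm : ℕ × ℕ, F jm :=
      tsum_congr (fun jm => hfiber jm)
    have hstep4 : ∑' jm : ℕ × ℕ, F jm = (∑' j : ℕ, r1 ^ j) * (∑' m : ℕ, r2 ^ m) := by
      rw [Summable.tsum_prod' hFsum (fun j => by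
        simpa [hFdef] using (summable_geometric_of_lt_one hr2pos.le h2).mul_left (r1 ^ j))]
      calc ∑' (j : ℕ) (m : ℕ), r1 ^ j * r2 ^ m
          = ∑' j : ℕ, r1 ^ j * ∑' m : ℕ, r2 ^ m := by
            exact tsum_congr (fun j => tsum_mul_left)
        _ = (∑' j : ℕ, r1 ^ j) * (∑' m : ℕ, r2 ^ m) := tsum_mul_right
    have hgeo1 : ∑' j : ℕ, r1 ^ j = (1 - r1)⁻¹ := tsum_geometric_of_lt_one hr1pos.le h1
    have hgeo2 : ∑' m : ℕ, r2 ^ m = (1 - r2)⁻¹ := tsum_geometric_of_lt_one hr2pos.le h2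
    show ∑' r : R, f r = _
    rw [hstep1, hstep2, hstep3, hstep4, hgeo1, hgeo2, hr1, hr2]
    ring

end
end

section
/- Let a countable group G act by homeomorphisms on a locally compact second countable Hausdorff space X, let N : G → (0,∞) be a group homomorphism, let β ∈ ℝ, let Y ⊆ X be a clopen subset, and let μ be a Borel measure on X that is concentrated on Y, finite on compact subsets of Y, and satisfies μ(gZ) = N(g)^(−β)·μ(Z) for every g ∈ G and every Borel set Z ⊆ Y with gZ ⊆ Y. Then there exists a unique Borel measure μ̃ on X concentrated on GY = ∪_{g∈G} gY, finite on compact subsets of GY, such that μ̃(Z) = μ(Z) for every Borel Z ⊆ Y and μ̃(gZ) = N(g)^(−β)·μ̃(Z) for every g ∈ G and every Borel set Z ⊆ GY. -/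
open MeasureTheory Set Pointwise

/-- extension of a scaling measure from a clopen set `Y` to `GY`. -/
theorem extension_of_scaling_measure
    {G X : Type*} [Group G] [Countable G]
    [TopologicalSpace X] [T2Space X] [LocallyCompactSpace X] [SecondCountableTopology X]
    [MeasurableSpace X] [BorelSpace X]
    [MulAction G X] (hcont : ∀ g : G, Continuous fun x : X => g • x)
    (N : G →* ℝ) (hN : ∀ g : G, 0 < N g) (β : ℝ)
    (Y : Set X) (hY : IsClopen Y)
    (μ : Measure X) (hconc : μ Yᶜ = 0)
    (hfin : ∀ K : Set X, K ⊆ Y → IsCompact K → μ K < ⊤)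
    (hscale : ∀ (g : G) (Z : Set X), MeasurableSet Z → Z ⊆ Y → (g • ·) '' Z ⊆ Y →
      μ ((g • ·) '' Z) = ENNReal.ofReal (N g ^ (-β)) * μ Z) :
    ∃! ν : Measure X,
      ν (⋃ g : G, (g • ·) '' Y)ᶜ = 0 ∧
      (∀ K : Set X, K ⊆ ⋃ g : G, (g • ·) '' Y → IsCompact K → ν K < ⊤) ∧
      (∀ Z : Set X, MeasurableSet Z → Z ⊆ Y → ν Z = μ Z) ∧
      (∀ (g : G) (Z : Set X), MeasurableSet Z → Z ⊆ ⋃ g : G, (g • ·) '' Y →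
        ν ((g • ·) '' Z) = ENNReal.ofReal (N g ^ (-β)) * ν Z) := by
  classical
  haveI : ContinuousConstSMul G X := ⟨hcont⟩
  simp only [Set.image_smul]
  -- the scaling constant
  set c : G → ENNReal := fun g => ENNReal.ofReal (N g ^ (-β)) with hc
  have hcmul : ∀ g h : G, c (g * h) = c g * c h := by
    intro g h
    simp only [hc, map_mul]
    rw [Real.mul_rpow (hN g).le (hN h).le,
      ENNReal.ofReal_mul (Real.rpow_nonneg (hN g).le _)]
  have hcone : c 1 = 1 := by simp [hc]
  have hctop : ∀ g : G, c g ≠ ⊤ := fun g => ENNReal.ofReal_ne_top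
  have hcc : ∀ a b : G, c a * c (a⁻¹ * b) = c b := by
    intro a b
    rw [← hcmul, mul_inv_cancel_left]
  -- measurability and disjointness of translates
  have hms : ∀ (g : G) {s : Set X}, MeasurableSet s → MeasurableSet (g • s) := by
    intro g s hs
    rw [← Set.image_smul]
    exact (Homeomorph.smul g).toMeasurableEquiv.measurableSet_image.2 hs
  have hdisj : ∀ (g : G) {s t : Set X}, Disjoint s t → Disjoint (g • s) (g • t) := by
    intro g s t h
    rw [← Set.image_smul, ← Set.image_smul]
    exact (Set.disjoint_image_iff (MulAction.injective g)).2 h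
  have key : ∀ (a : G) (s t : Set X), a • s ∩ t = a • (s ∩ a⁻¹ • t) := by
    intro a s t
    rw [Set.smul_set_inter, smul_inv_smul]
  -- scaling hypothesis in smul form
  have hscale' : ∀ (g : G) (Z : Set X), MeasurableSet Z → Z ⊆ Y → g • Z ⊆ Y →
      μ (g • Z) = c g * μ Z := fun g Z h1 h2 h3 => hscale g Z h1 h2 h3
  -- an enumeration of G starting with 1
  obtain ⟨e0, he0⟩ := exists_surjective_nat G
  set T : ℕ → G := fun n => Nat.rec 1 (fun m _ => e0 m) n with hT
  have hT0 : T 0 = 1 := rfl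
  have hTsurj : ∀ g : G, ∃ n, T n = g := by
    intro g
    obtain ⟨m, hm⟩ := he0 g
    exact ⟨m + 1, hm⟩
  -- the disjointified pieces
  set S : ℕ → Set X := fun n => T n • Y with hS
  set A : ℕ → Set X := disjointed S with hA
  have hYmeas : MeasurableSet Y := hY.isClosed.measurableSet
  have hSmeas : ∀ n, MeasurableSet (S n) := fun n => hms (T n) hYmeas
  have hAmeas : ∀ n, MeasurableSet (A n) := MeasurableSet.disjointed hSmeas
  have hAsub : ∀ n, A n ⊆ S n := disjointed_subset S
  have hAdisj : Pairwise (Function.onFun Disjoint A) := disjoint_disjointed S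
  have hA0 : A 0 = Y := by
    rw [hA, disjointed_zero, hS]
    simp [hT0]
  set U : Set X := ⋃ g : G, g • Y with hU
  have hSU : ∀ n, S n ⊆ U := by
    intro n
    rw [hS, hU]
    exact subset_iUnion (fun g : G => g • Y) (T n)
  have hAU : ⋃ n, A n = U := by
    rw [hA, iUnion_disjointed]
    refine Set.Subset.antisymm (iUnion_subset fun n => hSU n) ?_
    intro x hx
    rw [hU, mem_iUnion] at hx
    obtain ⟨g, hg⟩ := hx
    obtain ⟨n, rfl⟩ := hTsurj g
    exact mem_iUnion.2 ⟨n, hg⟩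
  have hYU : Y ⊆ U := by
    rw [← hA0]
    rw [← hAU]
    exact subset_iUnion A 0
  have hUmeas : MeasurableSet U := by
    rw [← hAU]; exact MeasurableSet.iUnion hAmeas
  have hUinv : ∀ (g : G) {s : Set X}, s ⊆ U → g • s ⊆ U := by
    intro g s hs x hx
    rw [← Set.image_smul] at hx
    obtain ⟨y, hy, rfl⟩ := hx
    have hyU := hs hy
    rw [hU, mem_iUnion] at hyU
    obtain ⟨h, hh⟩ := hyU
    obtain ⟨z, hz, rfl⟩ := hh
    rw [hU, mem_iUnion]
    refine ⟨g * h, ?_⟩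
    show g • h • z ∈ (g * h) • Y
    rw [← mul_smul]
    exact smul_mem_smul_set hz
  have hBsubY : ∀ (n : ℕ) (s : Set X), s ⊆ A n → (T n)⁻¹ • s ⊆ Y := by
    intro n s hs
    have h1 : (T n)⁻¹ • s ⊆ (T n)⁻¹ • S n := Set.smul_set_mono (hs.trans (hAsub n))
    rwa [hS, inv_smul_smul] at h1
  -- the candidate measure
  set ν : Measure X :=
    Measure.sum (fun n => ((c (T n)) • (Measure.map (fun x => T n • x) μ)).restrict (A n))
    with hν
  have hν_apply : ∀ {Z : Set X}, MeasurableSet Z →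
      ν Z = ∑' n, c (T n) * μ ((T n)⁻¹ • (Z ∩ A n)) := by
    intro Z hZ
    rw [hν, Measure.sum_apply _ hZ]
    refine tsum_congr fun n => ?_
    rw [Measure.restrict_apply hZ, Measure.smul_apply, smul_eq_mul,
      Measure.map_apply (hcont (T n)).measurable (hZ.inter (hAmeas n)),
      Set.preimage_smul]
  -- Property 1 : concentration
  have p1 : ν Uᶜ = 0 := by
    rw [hν_apply hUmeas.compl]
    have h0 : ∀ n : ℕ, (Uᶜ ∩ A n : Set X) = ∅ := by
      intro n
      exact Set.eq_empty_iff_forall_notMem.2 fun x hx => hx.1 (hSU n (hAsub n hx.2))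
    simp [h0]
  -- Property 3 : extension of μ
  have p3 : ∀ Z : Set X, MeasurableSet Z → Z ⊆ Y → ν Z = μ Z := by
    intro Z hZ hZY
    rw [hν_apply hZ]
    have hzero : ∀ n : ℕ, n ≠ 0 → c (T n) * μ ((T n)⁻¹ • (Z ∩ A n)) = 0 := by
      intro n hn
      have hempty : Z ∩ A n = ∅ := by
        rw [Set.eq_empty_iff_forall_notMem]
        intro x hx
        exact Set.disjoint_left.1 (hAdisj hn) hx.2 (hA0 ▸ hZY hx.1)
      simp [hempty]
    rw [tsum_eq_single 0 hzero, hT0, hA0, hcone, one_mul,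
      Set.inter_eq_self_of_subset_left hZY, inv_one, one_smul]
  -- Property 4 : scaling
  have p4 : ∀ (g : G) (Z : Set X), MeasurableSet Z → Z ⊆ U →
      ν (g • Z) = c g * ν Z := by
    intro g Z hZ hZU
    have hZA : ∀ n, MeasurableSet (Z ∩ A n) := fun n => hZ.inter (hAmeas n)
    have hgZ : MeasurableSet (g • Z) := hms g hZ
    have hZdecomp : g • Z = ⋃ n, g • (Z ∩ A n) := by
      conv_lhs => rw [← Set.inter_eq_self_of_subset_left hZU, ← hAU, Set.inter_iUnion,
        Set.smul_set_iUnion]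
    rw [hν_apply hgZ, hν_apply hZ]
    have hterm : ∀ k, c (T k) * μ ((T k)⁻¹ • (g • Z ∩ A k))
        = ∑' n, c g * (c (T n) * μ ((T n)⁻¹ • (Z ∩ A n ∩ g⁻¹ • A k))) := by
      intro k
      have hdi : Pairwise (Function.onFun Disjoint fun n => (T k)⁻¹ • (g • (Z ∩ A n) ∩ A k)) := by
        intro i j hij
        exact hdisj _ (((hdisj g ((hAdisj hij).mono inter_subset_right
          inter_subset_right)).mono inter_subset_left inter_subset_left))
      have hme : ∀ n, MeasurableSet ((T k)⁻¹ • (g • (Z ∩ A n) ∩ A k)) :=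
        fun n => hms _ ((hms g (hZA n)).inter (hAmeas k))
      rw [hZdecomp, Set.iUnion_inter, Set.smul_set_iUnion, measure_iUnion hdi hme,
        ← ENNReal.tsum_mul_left]
      refine tsum_congr fun n => ?_
      have hset : (T k)⁻¹ • (g • (Z ∩ A n) ∩ A k)
          = ((T k)⁻¹ * (g * T n)) • ((T n)⁻¹ • (Z ∩ A n ∩ g⁻¹ • A k)) := by
        rw [key g (Z ∩ A n) (A k), mul_smul, mul_smul, smul_inv_smul]
      have hBY : (T n)⁻¹ • (Z ∩ A n ∩ g⁻¹ • A k) ⊆ Y :=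
        hBsubY n _ fun x hx => hx.1.2
      have hBmeas : MeasurableSet ((T n)⁻¹ • (Z ∩ A n ∩ g⁻¹ • A k)) :=
        hms _ ((hZA n).inter (hms _ (hAmeas k)))
      have himgY : ((T k)⁻¹ * (g * T n)) • ((T n)⁻¹ • (Z ∩ A n ∩ g⁻¹ • A k)) ⊆ Y := by
        rw [← hset]
        exact hBsubY k _ fun x hx => hx.2
      rw [hset, hscale' _ _ hBmeas hBY himgY, ← mul_assoc, hcc, hcmul, mul_assoc]
    calc ∑' k, c (T k) * μ ((T k)⁻¹ • (g • Z ∩ A k))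
        = ∑' (k) (n), c g * (c (T n) * μ ((T n)⁻¹ • (Z ∩ A n ∩ g⁻¹ • A k))) :=
          tsum_congr hterm
      _ = ∑' (n) (k), c g * (c (T n) * μ ((T n)⁻¹ • (Z ∩ A n ∩ g⁻¹ • A k))) :=
          ENNReal.tsum_comm
      _ = ∑' n, c g * (c (T n) * ∑' k, μ ((T n)⁻¹ • (Z ∩ A n ∩ g⁻¹ • A k))) := by
          refine tsum_congr fun n => ?_
          rw [ENNReal.tsum_mul_left, ENNReal.tsum_mul_left]
      _ = ∑' n, c g * (c (T n) * μ ((T n)⁻¹ • (Z ∩ A n))) := by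
          refine tsum_congr fun n => ?_
          have hdk : Pairwise (Function.onFun Disjoint fun k => (T n)⁻¹ • (Z ∩ A n ∩ g⁻¹ • A k)) := by
            intro i j hij
            exact hdisj _ ((hdisj g⁻¹ (hAdisj hij)).mono inter_subset_right
              inter_subset_right)
          have hmk : ∀ k, MeasurableSet ((T n)⁻¹ • (Z ∩ A n ∩ g⁻¹ • A k)) :=
            fun k => hms _ ((hZA n).inter (hms _ (hAmeas k)))
          have hUn : ⋃ k, (T n)⁻¹ • (Z ∩ A n ∩ g⁻¹ • A k) = (T n)⁻¹ • (Z ∩ A n) := by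
            rw [← Set.smul_set_iUnion]
            congr 1
            rw [← Set.inter_iUnion, ← Set.smul_set_iUnion, hAU]
            refine Set.inter_eq_self_of_subset_left ?_
            intro x hx
            exact Set.mem_smul_set.2
              ⟨g • x, hUinv g hZU (smul_mem_smul_set hx.1), inv_smul_smul g x⟩
          rw [← measure_iUnion hdk hmk, hUn]
      _ = c g * ∑' n, c (T n) * μ ((T n)⁻¹ • (Z ∩ A n)) := ENNReal.tsum_mul_left
  -- Property 2 : finiteness on compacts
  have p2 : ∀ K : Set X, K ⊆ U → IsCompact K → ν K < ⊤ := by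
    intro K hKU hK
    have hopen : ∀ g : G, IsOpen ((g : G) • Y) := by
      intro g
      rw [← Set.image_smul]
      exact (Homeomorph.smul g).isOpen_image.2 hY.isOpen
    obtain ⟨t, ht⟩ := hK.elim_finite_subcover (fun g : G => g • Y) hopen (hU ▸ hKU)
    have hKsub : K ⊆ ⋃ g ∈ t, K ∩ g • Y := by
      intro x hx
      obtain ⟨g, hg, hxg⟩ := mem_iUnion₂.1 (ht hx)
      exact mem_iUnion₂.2 ⟨g, hg, hx, hxg⟩
    refine lt_of_le_of_lt (le_trans (measure_mono hKsub) (measure_biUnion_finset_le t _)) ?_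
    rw [ENNReal.sum_lt_top]
    intro g hg
    have hclosed : IsClosed ((g : G) • Y) := by
      rw [← Set.image_smul]
      exact (Homeomorph.smul g).isClosed_image.2 hY.isClosed
    have hKg : IsCompact (K ∩ g • Y) := hK.inter_right hclosed
    have hK' : IsCompact (g⁻¹ • (K ∩ g • Y)) := by
      rw [← Set.image_smul]
      exact hKg.image (hcont g⁻¹)
    have hK'Y : g⁻¹ • (K ∩ g • Y) ⊆ Y := by
      have h1 : g⁻¹ • (K ∩ g • Y) ⊆ g⁻¹ • (g • Y) := Set.smul_set_mono inter_subset_right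
      rwa [inv_smul_smul] at h1
    have hK'meas : MeasurableSet (g⁻¹ • (K ∩ g • Y)) := hK'.isClosed.measurableSet
    have hνKg : ν (K ∩ g • Y) = c g * μ (g⁻¹ • (K ∩ g • Y)) := by
      conv_lhs => rw [← smul_inv_smul g (K ∩ g • Y)]
      rw [p4 g _ hK'meas (hK'Y.trans hYU), p3 _ hK'meas hK'Y]
    rw [hνKg]
    exact ENNReal.mul_lt_top (hctop g).lt_top (hfin _ hK'Y hK')
  -- the formula determining any such measure
  have hformula : ∀ ν' : Measure X, ν' Uᶜ = 0 →
      (∀ Z : Set X, MeasurableSet Z → Z ⊆ Y → ν' Z = μ Z) →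
      (∀ (g : G) (Z : Set X), MeasurableSet Z → Z ⊆ U → ν' (g • Z) = c g * ν' Z) →
      ∀ Z : Set X, MeasurableSet Z → ν' Z = ∑' n, c (T n) * μ ((T n)⁻¹ • (Z ∩ A n)) := by
    intro ν' h1 h3 h4 Z hZ
    have hdiff : ν' (Z \ U) = 0 := measure_mono_null (fun x hx => hx.2) h1
    have hsplit : ν' Z = ν' (Z ∩ U) := by
      calc ν' Z = ν' (Z ∩ U) + ν' (Z \ U) := (measure_inter_add_diff Z hUmeas).symm
        _ = ν' (Z ∩ U) := by rw [hdiff, add_zero]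
    have hdZA : Pairwise (Function.onFun Disjoint fun n => Z ∩ A n) := by
      intro i j hij
      exact (hAdisj hij).mono inter_subset_right inter_subset_right
    have hmZA : ∀ n, MeasurableSet (Z ∩ A n) := fun n => hZ.inter (hAmeas n)
    rw [hsplit, ← hAU, Set.inter_iUnion, measure_iUnion hdZA hmZA]
    refine tsum_congr fun n => ?_
    have hmeasn : MeasurableSet ((T n)⁻¹ • (Z ∩ A n)) := hms _ (hmZA n)
    have hsubY : (T n)⁻¹ • (Z ∩ A n) ⊆ Y := hBsubY n _ inter_subset_right
    conv_lhs => rw [← smul_inv_smul (T n) (Z ∩ A n)]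
    rw [h4 _ _ hmeasn (hsubY.trans hYU), h3 _ hmeasn hsubY]
  -- conclusion
  refine ⟨ν, ⟨p1, p2, p3, p4⟩, ?_⟩
  rintro ν' ⟨q1, q2, q3, q4⟩
  refine Measure.ext fun Z hZ => ?_
  rw [hformula ν' q1 q3 q4 Z hZ, ← hformula ν p1 p3 p4 Z hZ]
end

section
/- Let a countable group G act by Borel automorphisms on a standard Borel space X, let Γ be a subgroup of G, let N : G → (0,∞) be a group homomorphism with N(γ) = 1 for all γ ∈ Γ, and let β ∈ ℝ. Let Y ⊆ X be a Γ-invariant Borel set and Y₀ ⊆ Y a Γ-invariant Borel set such that: (i) if gY₀ ∩ Y₀ ≠ ∅ for some g ∈ G then g ∈ Γ; and (ii) for every y ∈ Y there exists g ∈ G with gy ∈ Y₀. Then every Γ-invariant Borel measure μ₀ on X concentrated on Y₀ extends uniquely to a Borel measure μ on X concentrated on Y such that μ(Z) = μ₀(Z) for Borel Z ⊆ Y₀ and μ(gZ) = N(g)^(−β)·μ(Z) for every g ∈ G and every Borel set Z ⊆ Y with gZ ⊆ Y. -/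
open MeasureTheory

private lemma ext14_image_smul_eq_preimage {G X : Type*} [Group G] [MulAction G X]
    (g : G) (A : Set X) : (g • ·) '' A = (g⁻¹ • ·) ⁻¹' A := by
  ext x
  constructor
  · rintro ⟨a, ha, rfl⟩; simpa using ha
  · intro h; exact ⟨g⁻¹ • x, h, by simp⟩

/-- unique extension of a `Γ`-invariant measure on `Y₀` to a
`β`-scaling measure on `Y`. -/
theorem extension_of_invariant_measure
    {G X : Type*} [Group G] [Countable G]
    [MeasurableSpace X] [StandardBorelSpace X]
    [MulAction G X] (hmeas : ∀ g : G, Measurable fun x : X => g • x)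
    (Γ : Subgroup G) (N : G →* ℝ) (hN : ∀ g : G, 0 < N g)
    (hNΓ : ∀ γ ∈ Γ, N γ = 1) (β : ℝ)
    (Y Y₀ : Set X) (hYmeas : MeasurableSet Y) (hY₀meas : MeasurableSet Y₀)
    (hY₀Y : Y₀ ⊆ Y)
    (hYinv : ∀ γ ∈ Γ, (γ • ·) '' Y = Y) (hY₀inv : ∀ γ ∈ Γ, (γ • ·) '' Y₀ = Y₀)
    (hi : ∀ g : G, ((g • ·) '' Y₀ ∩ Y₀).Nonempty → g ∈ Γ)
    (hii : ∀ y ∈ Y, ∃ g : G, g • y ∈ Y₀)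
    (μ₀ : Measure X) (hμ₀conc : μ₀ Y₀ᶜ = 0)
    (hμ₀inv : ∀ γ ∈ Γ, ∀ Z : Set X, MeasurableSet Z → μ₀ ((γ • ·) '' Z) = μ₀ Z) :
    ∃! μ : Measure X,
      μ Yᶜ = 0 ∧
      (∀ Z : Set X, MeasurableSet Z → Z ⊆ Y₀ → μ Z = μ₀ Z) ∧
      (∀ (g : G) (Z : Set X), MeasurableSet Z → Z ⊆ Y → (g • ·) '' Z ⊆ Y →
        μ ((g • ·) '' Z) = ENNReal.ofReal (N g ^ (-β)) * μ Z) := by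
  classical
  letI s : Setoid G := QuotientGroup.rightRel Γ
  let Q := Quotient s
  haveI : Countable Q := Quotient.countable
  -- relation unfolding
  have hrel : ∀ g h : G, s.r g h ↔ h * g⁻¹ ∈ Γ := fun g h =>
    QuotientGroup.rightRel_apply
  -- weight
  set w : G → ENNReal := fun g => ENNReal.ofReal (N g ^ β) with hw
  have hw_pos : ∀ g, 0 < w g := fun g =>
    ENNReal.ofReal_pos.2 (Real.rpow_pos_of_pos (hN g) β)
  have hw_ne_top : ∀ g, w g ≠ ⊤ := fun g => ENNReal.ofReal_ne_top
  have hw_mul : ∀ g h : G, w (g * h) = w g * w h := by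
    intro g h
    simp only [hw, map_mul]
    rw [Real.mul_rpow (hN g).le (hN h).le,
      ENNReal.ofReal_mul (Real.rpow_nonneg (hN g).le β)]
  have hw_one : ∀ γ ∈ Γ, w γ = 1 := by
    intro γ hγ; simp [hw, hNΓ γ hγ]
  have hw_inv : ∀ g : G, ENNReal.ofReal (N g ^ (-β)) = (w g)⁻¹ := by
    intro g
    rw [Real.rpow_neg (hN g).le, hw]
    exact ENNReal.ofReal_inv_of_pos (Real.rpow_pos_of_pos (hN g) β)
  -- basic facts about preimages
  have hcomp : ∀ (a b : G) (S : Set X),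
      ((a * b) • ·) ⁻¹' S = (b • ·) ⁻¹' ((a • ·) ⁻¹' S) := by
    intro a b S; ext x; simp [mul_smul]
  have himg : ∀ (g : G) (A : Set X), (g • ·) '' A = (g⁻¹ • ·) ⁻¹' A :=
    fun g A => ext14_image_smul_eq_preimage g A
  have hY₀pre : ∀ γ ∈ Γ, (γ • ·) ⁻¹' Y₀ = Y₀ := by
    intro γ hγ
    have h := hY₀inv γ⁻¹ (inv_mem hγ)
    rw [himg] at h
    simpa using h
  have hμ₀pre : ∀ γ ∈ Γ, ∀ A : Set X, MeasurableSet A →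
      μ₀ ((γ • ·) ⁻¹' A) = μ₀ A := by
    intro γ hγ A hA
    have h := himg γ⁻¹ A
    rw [inv_inv] at h
    rw [← h]
    exact hμ₀inv γ⁻¹ (inv_mem hγ) A hA
  -- the basic set function
  set m : G → Set X → ENNReal :=
    fun g A => w g * μ₀ ((g⁻¹ • ·) ⁻¹' (A ∩ Y)) with hm
  -- coset invariance of `m`
  have hm_coset : ∀ g h : G, h * g⁻¹ ∈ Γ → ∀ A : Set X, MeasurableSet A →
      m g A = m h A := by
    intro g h hγ A hA
    set γ : G := h * g⁻¹ with hγdef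
    have hh : h = γ * g := by rw [hγdef]; group
    have hwgh : w h = w g := by rw [hh, hw_mul, hw_one γ hγ, one_mul]
    have hpre : (h⁻¹ • ·) ⁻¹' (A ∩ Y) = (γ⁻¹ • ·) ⁻¹' ((g⁻¹ • ·) ⁻¹' (A ∩ Y)) := by
      rw [hh, mul_inv_rev, hcomp]
    have hms : MeasurableSet ((g⁻¹ • ·) ⁻¹' (A ∩ Y)) :=
      (hmeas g⁻¹) (hA.inter hYmeas)
    simp only [hm]
    rw [hwgh, hpre, hμ₀pre γ⁻¹ (inv_mem hγ) _ hms]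
  -- the candidate measure
  set μ : Measure X :=
    Measure.sum (fun c : Q => w c.out •
      ((μ₀.map ((c.out)⁻¹ • ·)).restrict Y)) with hμdef
  have hμapply : ∀ A : Set X, MeasurableSet A → μ A = ∑' c : Q, m c.out A := by
    intro A hA
    rw [hμdef, Measure.sum_apply _ hA]
    refine tsum_congr fun c => ?_
    rw [Measure.smul_apply, smul_eq_mul, Measure.restrict_apply hA,
      Measure.map_apply (hmeas _) (hA.inter hYmeas)]
  -- membership of `Γ` and cosets
  have hout_rel : ∀ g : G, g * ((⟦g⟧ : Q).out)⁻¹ ∈ Γ := by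
    intro g
    exact (hrel _ _).mp (Quotient.exact ((⟦g⟧ : Q).out_eq))
  have hmk_one : ∀ g : G, g ∈ Γ → (⟦g⟧ : Q) = ⟦1⟧ := by
    intro g hg
    exact Quotient.sound ((hrel g 1).mpr (by simpa using inv_mem hg))
  have hone_mem : ∀ c : Q, c = ⟦1⟧ → c.out ∈ Γ := by
    intro c hc
    have := hout_rel (1 : G)
    rw [← hc] at this
    simpa using inv_mem this
  have hmem_one : ∀ c : Q, c.out ∈ Γ → c = ⟦1⟧ := by
    intro c hc
    rw [← Quotient.out_eq c]
    exact hmk_one c.out hc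
  -- Property (1): concentrated on Y
  have P1 : μ Yᶜ = 0 := by
    rw [hμapply Yᶜ hYmeas.compl]
    have : ∀ c : Q, m c.out Yᶜ = 0 := by
      intro c
      simp [hm, Set.compl_inter_self]
    simp [this]
  -- Property (2): agrees with μ₀ on subsets of Y₀
  have P2 : ∀ Z : Set X, MeasurableSet Z → Z ⊆ Y₀ → μ Z = μ₀ Z := by
    intro Z hZ hZY₀
    rw [hμapply Z hZ]
    have hZY : Z ∩ Y = Z := Set.inter_eq_left.mpr (hZY₀.trans hY₀Y)
    have hterm : ∀ g : G, m g Z = w g * μ₀ ((g • ·) '' Z) := by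
      intro g
      simp only [hm, hZY, himg g Z]
    rw [tsum_eq_single (⟦1⟧ : Q)]
    · have hγ : (⟦(1 : G)⟧ : Q).out ∈ Γ := hone_mem _ rfl
      rw [hterm, hw_one _ hγ, one_mul, hμ₀inv _ hγ Z hZ]
    · intro c hc
      have hnot : c.out ∉ Γ := fun h => hc (hmem_one c h)
      rw [hterm]
      have hdisj : (c.out • ·) '' Z ⊆ Y₀ᶜ := by
        intro x hx
        intro hxY₀
        exact hnot (hi c.out ⟨x, Set.image_mono hZY₀ hx, hxY₀⟩)
      have : μ₀ ((c.out • ·) '' Z) = 0 :=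
        le_antisymm (hμ₀conc ▸ measure_mono hdisj) zero_le
      rw [this, mul_zero]
  -- Property (3): scaling
  have P3 : ∀ (g : G) (Z : Set X), MeasurableSet Z → Z ⊆ Y → (g • ·) '' Z ⊆ Y →
      μ ((g • ·) '' Z) = ENNReal.ofReal (N g ^ (-β)) * μ Z := by
    intro g Z hZ hZY hgZY
    have hgZmeas : MeasurableSet ((g • ·) '' Z) := by
      rw [himg]; exact (hmeas g⁻¹) hZ
    rw [hμapply _ hgZmeas, hμapply Z hZ, hw_inv g]
    have hterm : ∀ h : G, m h ((g • ·) '' Z) = (w g)⁻¹ * m (h * g) Z := by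
      intro h
      have h1 : (g • ·) '' Z ∩ Y = (g • ·) '' Z := Set.inter_eq_left.mpr hgZY
      have h2 : Z ∩ Y = Z := Set.inter_eq_left.mpr hZY
      have h3 : (h⁻¹ • ·) ⁻¹' ((g • ·) '' Z) = (((h * g))⁻¹ • ·) ⁻¹' Z := by
        rw [himg g Z, mul_inv_rev, hcomp g⁻¹ h⁻¹]
      simp only [hm, h1, h2, h3, hw_mul h g]
      rw [mul_comm (w h) (w g), mul_assoc (w g), ← mul_assoc (w g)⁻¹,
        ENNReal.inv_mul_cancel (hw_pos g).ne' (hw_ne_top g), one_mul]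
    calc ∑' c : Q, m c.out ((g • ·) '' Z)
        = ∑' c : Q, (w g)⁻¹ * m (c.out * g) Z := tsum_congr fun c => hterm c.out
      _ = (w g)⁻¹ * ∑' c : Q, m (c.out * g) Z := ENNReal.tsum_mul_left
      _ = (w g)⁻¹ * ∑' c : Q, m c.out Z := by
          congr 1
          have heq : ∀ a b : G, s.r a b ↔ s.r (a * g) (b * g) := by
            intro a b
            rw [hrel, hrel]
            constructor
            · intro hab; convert hab using 1; group
            · intro hab; convert hab using 1; group
          let e : Q ≃ Q := Quotient.congr (Equiv.mulRight g) heq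
          have hec : ∀ c : Q, e c = ⟦c.out * g⟧ := by
            intro c
            conv_lhs => rw [← Quotient.out_eq c]
            rfl
          have hkey : ∀ c : Q, m (c.out * g) Z = m (e c).out Z := by
            intro c
            refine hm_coset (c.out * g) (e c).out ?_ Z hZ
            have h1 : (⟦(e c).out⟧ : Q) = ⟦c.out * g⟧ := by
              rw [Quotient.out_eq, hec]
            have h2 : s.r (e c).out (c.out * g) := Quotient.exact h1
            exact (hrel _ _).mp (Setoid.symm h2)
          calc ∑' c : Q, m (c.out * g) Z = ∑' c : Q, m (e c).out Z :=
                tsum_congr hkey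
            _ = ∑' c : Q, m c.out Z := e.tsum_eq (fun c => m c.out Z)
  -- the value formula satisfied by any measure with the three properties
  set S : Q → Set X := fun c => (c.out • ·) ⁻¹' Y₀ with hS
  have hSmeas : ∀ c : Q, MeasurableSet (S c) := fun c => (hmeas c.out) hY₀meas
  have hScover : Y ⊆ ⋃ c : Q, S c := by
    intro x hx
    obtain ⟨g, hg⟩ := hii x hx
    refine Set.mem_iUnion.2 ⟨⟦g⟧, ?_⟩
    set γ : G := g * ((⟦g⟧ : Q).out)⁻¹ with hγdef
    have hγ : γ ∈ Γ := hout_rel g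
    have hout : (⟦g⟧ : Q).out = γ⁻¹ * g := by rw [hγdef]; group
    show (⟦g⟧ : Q).out • x ∈ Y₀
    rw [hout, mul_smul]
    have := hY₀pre γ⁻¹ (inv_mem hγ)
    rw [← this] at hg
    exact hg
  have hSdisj : Pairwise (Function.onFun Disjoint S) := by
    intro c c' hcc'
    rw [Function.onFun, Set.disjoint_left]
    intro x hxc hxc'
    apply hcc'
    have hmem : c'.out • x ∈ (((c'.out) * (c.out)⁻¹) • ·) '' Y₀ ∩ Y₀ := by
      constructor
      · exact ⟨c.out • x, hxc, by simp [mul_smul]⟩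
      · exact hxc'
    have hγ : c'.out * (c.out)⁻¹ ∈ Γ := hi _ ⟨_, hmem⟩
    have : (⟦c.out⟧ : Q) = ⟦c'.out⟧ := Quotient.sound ((hrel _ _).mpr hγ)
    rw [Quotient.out_eq, Quotient.out_eq] at this
    exact this
  have value_formula : ∀ ν : Measure X,
      (ν Yᶜ = 0 ∧
      (∀ Z : Set X, MeasurableSet Z → Z ⊆ Y₀ → ν Z = μ₀ Z) ∧
      (∀ (g : G) (Z : Set X), MeasurableSet Z → Z ⊆ Y → (g • ·) '' Z ⊆ Y →
        ν ((g • ·) '' Z) = ENNReal.ofReal (N g ^ (-β)) * ν Z)) →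
      ∀ A : Set X, MeasurableSet A →
      ν A = ∑' c : Q, w c.out * μ₀ ((c.out • ·) '' (A ∩ Y ∩ S c)) := by
    intro ν ⟨hν1, hν2, hν3⟩ A hA
    have hAY : ν A = ν (A ∩ Y) := by
      have hdiff : ν (A \ Y) = 0 :=
        measure_mono_null (Set.diff_subset_compl A Y) hν1
      rw [← measure_inter_add_diff A hYmeas, hdiff, add_zero]
    have hcover : A ∩ Y = ⋃ c : Q, (A ∩ Y ∩ S c) := by
      apply Set.Subset.antisymm
      · intro x hx
        obtain ⟨c, hc⟩ := Set.mem_iUnion.1 (hScover hx.2)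
        exact Set.mem_iUnion.2 ⟨c, ⟨hx, hc⟩⟩
      · exact Set.iUnion_subset fun c => Set.inter_subset_left
    have hdisj' : Pairwise (Function.onFun Disjoint (fun c => A ∩ Y ∩ S c)) := by
      intro c c' h
      exact Set.disjoint_left.mpr fun x hx hx' =>
        Set.disjoint_left.mp (hSdisj h) hx.2 hx'.2
    have hmeas' : ∀ c : Q, MeasurableSet (A ∩ Y ∩ S c) :=
      fun c => (hA.inter hYmeas).inter (hSmeas c)
    rw [hAY]
    conv_lhs => rw [hcover]
    rw [measure_iUnion hdisj' hmeas']
    refine tsum_congr fun c => ?_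
    set Z : Set X := A ∩ Y ∩ S c with hZdef
    have hZmeas : MeasurableSet Z := hmeas' c
    have hZY : Z ⊆ Y := fun x hx => hx.1.2
    have hZimg : (c.out • ·) '' Z ⊆ Y₀ := by
      rintro _ ⟨z, hz, rfl⟩
      exact hz.2
    have himgmeas : MeasurableSet ((c.out • ·) '' Z) := by
      rw [himg]; exact (hmeas _) hZmeas
    have h3 := hν3 c.out Z hZmeas hZY (hZimg.trans hY₀Y)
    rw [hν2 _ himgmeas hZimg, hw_inv] at h3
    have h4 : w c.out * ((w c.out)⁻¹ * ν Z) = ν Z := by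
      rw [← mul_assoc, ENNReal.mul_inv_cancel (hw_pos _).ne' (hw_ne_top _),
        one_mul]
    rw [← h3] at h4
    exact h4.symm
  -- conclusion
  refine ⟨μ, ⟨P1, P2, P3⟩, ?_⟩
  intro ν hν
  ext A hA
  rw [value_formula ν hν A hA, value_formula μ ⟨P1, P2, P3⟩ A hA]
end

section
/- Let a countable group G act freely by homeomorphisms on a locally compact second countable Hausdorff space X, let Γ ≤ G act properly discontinuously on X, assume (G,Γ) is a Hecke pair, let N : G → (0,∞) be a homomorphism with N(γ) = 1 for all γ ∈ Γ, let β ∈ ℝ, and let μ be a Borel measure on X, finite on compact sets, with μ(gZ) = N(g)^(−β)·μ(Z) for every g ∈ G and every Borel set Z. Then for every Γ-invariant measurable function f : X → [0,∞], every Borel Γ-transversal D of X, and every g ∈ G: ∫_D (T_g f) dμ = Δ_Γ(g) · N(g)^β · ∫_D f dμ. -/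
open MeasureTheory
open scoped ENNReal

/-- The right cosets of `Γ` contained in the double coset `ΓgΓ`. -/
def rightCosetsIn {G : Type*} [Group G] (Γ : Subgroup G) (g : G) : Set (Set G) :=
  {C | ∃ x, (∃ γ₁ γ₂ : Γ, x = (γ₁ : G) * g * (γ₂ : G)) ∧ C = {y | ∃ γ : Γ, y = (γ : G) * x}}

/-- `R_Γ(g)`, the number of right cosets of `Γ` contained in `ΓgΓ`. -/
noncomputable def RGamma {G : Type*} [Group G] (Γ : Subgroup G) (g : G) : ℕ :=
  Nat.card (rightCosetsIn Γ g)

/-- The Hecke operator `T_g` on `Γ`-invariant functions: `(T_g f)(x)` is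
`R_Γ(g)⁻¹` times the sum over the right cosets `Γh ⊆ ΓgΓ` of the value `f(hx)`
(the value being independent of the representative `h` for a `Γ`-invariant `f`,
it is encoded here as the supremum over the coset). -/
noncomputable def heckeT {G X : Type*} [Group G] [MulAction G X]
    (Γ : Subgroup G) (g : G) (f : X → ℝ≥0∞) (x : X) : ℝ≥0∞ :=
  (RGamma Γ g : ℝ≥0∞)⁻¹ * ∑' C : rightCosetsIn Γ g, ⨆ h ∈ (C : Set G), f (h • x)

/-- A Borel `Γ`-transversal of a `Γ`-invariant set `W`: a Borel subset of `W`
containing exactly one point of each `Γ`-orbit contained in `W`. -/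
def IsBorelTransversal {G X : Type*} [Group G] [MulAction G X] [MeasurableSpace X]
    (Γ : Subgroup G) (W D : Set X) : Prop :=
  MeasurableSet D ∧ D ⊆ W ∧ ∀ x ∈ W, ∃! d, d ∈ D ∧ ∃ γ : Γ, (γ : G) • x = d

section Aux

variable {G X : Type*} [Group G] [TopologicalSpace X]
  [MeasurableSpace X] [BorelSpace X] [MulAction G X]

private lemma image_smul_eq_preimage (k : G) (A : Set X) :
    (fun x : X => k • x) '' A = (fun x : X => k⁻¹ • x) ⁻¹' A := by
  ext y
  constructor
  · rintro ⟨x, hx, rfl⟩; simpa [inv_smul_smul] using hx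
  · intro h; exact ⟨k⁻¹ • y, h, smul_inv_smul k y⟩

private lemma map_smul_measure
    (hcont : ∀ g : G, Continuous fun x : X => g • x)
    (N : G →* ℝ) (hN : ∀ g : G, 0 < N g) (β : ℝ) (μ : Measure X)
    (hscale : ∀ (g : G) (Z : Set X), MeasurableSet Z →
      μ ((g • ·) '' Z) = ENNReal.ofReal (N g ^ (-β)) * μ Z) (k : G) :
    Measure.map (fun x : X => k • x) μ = ENNReal.ofReal (N k ^ β) • μ := by
  ext s hs
  rw [Measure.map_apply (hcont k).measurable hs, Measure.smul_apply, smul_eq_mul]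
  have h1 : (fun x : X => k • x) ⁻¹' s = (fun x : X => k⁻¹ • x) '' s := by
    rw [image_smul_eq_preimage, inv_inv]
  rw [h1, hscale k⁻¹ s hs]
  congr 1
  have h2 : N k⁻¹ = (N k)⁻¹ := eq_inv_of_mul_eq_one_left (by rw [← map_mul]; simp)
  rw [h2, Real.inv_rpow (hN k).le, Real.rpow_neg (hN k).le, inv_inv]

private lemma lintegral_comp_smul
    (hcont : ∀ g : G, Continuous fun x : X => g • x)
    (N : G →* ℝ) (hN : ∀ g : G, 0 < N g) (β : ℝ) (μ : Measure X)
    (hscale : ∀ (g : G) (Z : Set X), MeasurableSet Z →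
      μ ((g • ·) '' Z) = ENNReal.ofReal (N g ^ (-β)) * μ Z) (k : G)
    (f : X → ℝ≥0∞) (hf : Measurable f) (A : Set X) (hA : MeasurableSet A) :
    ∫⁻ x in A, f (k • x) ∂μ
      = ENNReal.ofReal (N k ^ β) * ∫⁻ x in (fun x : X => k • x) '' A, f x ∂μ := by
  have hAk : MeasurableSet ((fun x : X => k • x) '' A) := by
    rw [image_smul_eq_preimage]; exact (hcont k⁻¹).measurable hA
  calc ∫⁻ x in A, f (k • x) ∂μ
      = ∫⁻ x, A.indicator (fun x => f (k • x)) x ∂μ :=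
        (lintegral_indicator hA _).symm
    _ = ∫⁻ x, ((fun x : X => k • x) '' A).indicator f (k • x) ∂μ := by
        refine lintegral_congr fun x => ?_
        by_cases hx : x ∈ A
        · rw [Set.indicator_of_mem hx, Set.indicator_of_mem (Set.mem_image_of_mem _ hx)]
        · rw [Set.indicator_of_notMem hx, Set.indicator_of_notMem]
          rw [(MulAction.injective k).mem_set_image]; exact hx
    _ = ∫⁻ y, ((fun x : X => k • x) '' A).indicator f y
          ∂(Measure.map (fun x : X => k • x) μ) :=
        (lintegral_map (hf.indicator hAk) (hcont k).measurable).symm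
    _ = ENNReal.ofReal (N k ^ β) * ∫⁻ y, ((fun x : X => k • x) '' A).indicator f y ∂μ := by
        rw [map_smul_measure hcont N hN β μ hscale k, lintegral_smul_measure, smul_eq_mul]
    _ = ENNReal.ofReal (N k ^ β) * ∫⁻ x in (fun x : X => k • x) '' A, f x ∂μ := by
        rw [lintegral_indicator hAk]

end Aux

/-- integrating a Hecke operator against a scaling measure. -/
theorem lintegral_heckeT_transversal
    {G X : Type*} [Group G] [Countable G]
    [TopologicalSpace X] [T2Space X] [LocallyCompactSpace X] [SecondCountableTopology X]
    [MeasurableSpace X] [BorelSpace X]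
    [MulAction G X] (hcont : ∀ g : G, Continuous fun x : X => g • x)
    (hfree : ∀ (g : G) (x : X), g • x = x → g = 1)
    (Γ : Subgroup G)
    (hproper : ∀ K L : Set X, IsCompact K → IsCompact L →
      {γ : Γ | (((γ : G) • ·) '' K ∩ L).Nonempty}.Finite)
    (hHecke : ∀ g : G, (rightCosetsIn Γ g).Finite)
    (N : G →* ℝ) (hN : ∀ g : G, 0 < N g) (hNΓ : ∀ γ ∈ Γ, N γ = 1) (β : ℝ)
    (μ : Measure X) (hfin : ∀ K : Set X, IsCompact K → μ K < ⊤)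
    (hscale : ∀ (g : G) (Z : Set X), MeasurableSet Z →
      μ ((g • ·) '' Z) = ENNReal.ofReal (N g ^ (-β)) * μ Z)
    (f : X → ℝ≥0∞) (hf : Measurable f)
    (hfinv : ∀ γ ∈ Γ, ∀ x : X, f (γ • x) = f x)
    (D : Set X) (hD : IsBorelTransversal Γ Set.univ D)
    (g : G) :
    ∫⁻ x in D, heckeT Γ g f x ∂μ =
      ENNReal.ofReal (((RGamma Γ g⁻¹ : ℝ) / (RGamma Γ g : ℝ)) * N g ^ β) *
        ∫⁻ x in D, f x ∂μ := by
  classical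
  obtain ⟨hDmeas, -, hDuniq⟩ := hD
  set T : Set G := {k : G | ∃ γ₁ γ₂ : Γ, k = (γ₁ : G) * g * (γ₂ : G)} with hTdef
  have msmul : ∀ k : G, Measurable fun x : X => k • x := fun k => (hcont k).measurable
  have mimg : ∀ k : G, MeasurableSet ((fun x : X => k • x) '' D) := fun k => by
    rw [image_smul_eq_preimage]; exact msmul k⁻¹ hDmeas
  -- unique element of Γ moving a given point into D
  have huniq : ∀ y : X, ∃! γ : Γ, (γ : G) • y ∈ D := by
    intro y
    obtain ⟨d, ⟨hdD, γ₀, hγ₀⟩, hdu⟩ := hDuniq y trivial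
    refine ⟨γ₀, show (γ₀ : G) • y ∈ D from by rw [hγ₀]; exact hdD, ?_⟩
    intro γ' hγ'
    have h1 : (γ' : G) • y = d := hdu _ ⟨hγ', γ', rfl⟩
    have h2 : ((γ₀ : G)⁻¹ * (γ' : G)) • y = y := by
      rw [mul_smul, h1, ← hγ₀, inv_smul_smul]
    have h3 := hfree _ _ h2
    exact Subtype.ext (inv_mul_eq_one.mp h3).symm
  have hNT : ∀ k ∈ T, N k = N g := by
    rintro k ⟨γ₁, γ₂, rfl⟩
    simp [map_mul, hNΓ _ γ₁.2, hNΓ _ γ₂.2]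
  -- generic lemma about equality of cosets
  have hcoset_eq : ∀ a b : G, (∃ γ : Γ, b = (γ : G) * a) →
      {y : G | ∃ γ : Γ, y = (γ : G) * a} = {y : G | ∃ γ : Γ, y = (γ : G) * b} := by
    rintro a b ⟨γ₀, rfl⟩
    ext y
    constructor
    · rintro ⟨γ, rfl⟩; exact ⟨γ * γ₀⁻¹, by simp [mul_assoc]⟩
    · rintro ⟨γ, rfl⟩; exact ⟨γ * γ₀, by simp [mul_assoc]⟩
  -- the counting lemma: for x ∈ D, the number of k ∈ T with k⁻¹ • x ∈ D is R_Γ(g⁻¹)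
  have hcount : ∀ x ∈ D, Nat.card {k : ↥T // ((k : G))⁻¹ • x ∈ D} = RGamma Γ g⁻¹ := by
    intro x hx
    have hΦmem : ∀ k : {k : ↥T // ((k : G))⁻¹ • x ∈ D},
        {y : G | ∃ γ : Γ, y = (γ : G) * ((k : ↥T) : G)⁻¹} ∈ rightCosetsIn Γ g⁻¹ := by
      intro k
      obtain ⟨γ₁, γ₂, hk⟩ := (k : ↥T).2
      exact ⟨((k : ↥T) : G)⁻¹, ⟨γ₂⁻¹, γ₁⁻¹, by rw [hk]; simp [mul_assoc]⟩, rfl⟩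
    let Φ : {k : ↥T // ((k : G))⁻¹ • x ∈ D} → ↥(rightCosetsIn Γ g⁻¹) :=
      fun k => ⟨_, hΦmem k⟩
    have hinj : Function.Injective Φ := by
      rintro ⟨⟨k₁, hk₁T⟩, hk₁⟩ ⟨⟨k₂, hk₂T⟩, hk₂⟩ heq
      have hsets : {y : G | ∃ γ : Γ, y = (γ : G) * k₁⁻¹}
          = {y : G | ∃ γ : Γ, y = (γ : G) * k₂⁻¹} := congrArg Subtype.val heq
      have hk2mem : k₂⁻¹ ∈ {y : G | ∃ γ : Γ, y = (γ : G) * k₁⁻¹} := by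
        rw [hsets]; exact ⟨1, by simp⟩
      obtain ⟨γ, hγ⟩ := hk2mem
      have h1 : (γ : G) • (k₁⁻¹ • x) ∈ D := by
        rw [← mul_smul, ← hγ]; exact hk₂
      obtain ⟨γu, hγu, hγuniq⟩ := huniq (k₁⁻¹ • x)
      have e1 : γ = γu := hγuniq γ h1
      have e2 : (1 : Γ) = γu := hγuniq 1 (by simpa using hk₁)
      have e3 : (γ : G) = 1 := by rw [e1, ← e2]; rfl
      have e4 : k₂⁻¹ = k₁⁻¹ := by rw [hγ, e3, one_mul]
      exact Subtype.ext (Subtype.ext (inv_injective e4.symm))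
    have hsurj : Function.Surjective Φ := by
      rintro ⟨C, m, ⟨γ₁, γ₂, hm⟩, rfl⟩
      obtain ⟨γ₀, hγ₀, -⟩ := huniq (m • x)
      have hmemT : ((γ₀ : G) * m)⁻¹ ∈ T :=
        ⟨γ₂⁻¹, γ₁⁻¹ * γ₀⁻¹, by rw [hm]; simp [mul_assoc]⟩
      have hmemD : ((((γ₀ : G) * m)⁻¹ : G))⁻¹ • x ∈ D := by
        simpa [mul_smul] using hγ₀
      refine ⟨⟨⟨((γ₀ : G) * m)⁻¹, hmemT⟩, hmemD⟩, Subtype.ext ?_⟩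
      show {y : G | ∃ γ : Γ, y = (γ : G) * (((γ₀ : G) * m)⁻¹)⁻¹}
          = {y : G | ∃ γ : Γ, y = (γ : G) * m}
      rw [inv_inv]
      exact (hcoset_eq m ((γ₀ : G) * m) ⟨γ₀, rfl⟩).symm
    exact Nat.card_eq_of_bijective Φ ⟨hinj, hsurj⟩
  -- positivity facts
  have hRgne : rightCosetsIn Γ g⁻¹ ≠ (∅ : Set (Set G)) := by
    intro h
    have : ({y : G | ∃ γ : Γ, y = (γ : G) * g⁻¹} : Set G) ∈ rightCosetsIn Γ g⁻¹ :=
      ⟨g⁻¹, ⟨1, 1, by simp⟩, rfl⟩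
    rw [h] at this; exact this
  have hRgpos : RGamma Γ g⁻¹ ≠ 0 := by
    haveI : Finite ↥(rightCosetsIn Γ g⁻¹) := (hHecke g⁻¹).to_subtype
    refine Nat.card_ne_zero.mpr ⟨?_, inferInstance⟩
    rcases Set.eq_empty_or_nonempty (rightCosetsIn Γ g⁻¹) with h | h
    · exact absurd h hRgne
    · exact h.to_subtype
  have hRpos : RGamma Γ g ≠ 0 := by
    haveI : Finite ↥(rightCosetsIn Γ g) := (hHecke g).to_subtype
    refine Nat.card_ne_zero.mpr ⟨?_, inferInstance⟩
    exact Set.Nonempty.to_subtype ⟨{y : G | ∃ γ : Γ, y = (γ : G) * g}, g, ⟨1, 1, by simp⟩, rfl⟩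
  -- pointwise sum over T
  have hpt : ∀ x : X, (∑' k : ↥T, (D ∩ (fun z : X => (k : G) • z) '' D).indicator f x)
      = (RGamma Γ g⁻¹ : ℝ≥0∞) * D.indicator f x := by
    intro x
    by_cases hx : x ∈ D
    · set F : Set ↥T := {k : ↥T | ((k : G))⁻¹ • x ∈ D} with hFdef
      have hcard : Nat.card ↥F = RGamma Γ g⁻¹ := hcount x hx
      haveI hFfin : Finite ↥F := Nat.finite_of_card_ne_zero (by rw [hcard]; exact hRgpos)
      have hterm : ∀ k : ↥T, (D ∩ (fun z : X => (k : G) • z) '' D).indicator f x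
          = F.indicator (fun _ => f x) k := by
        intro k
        by_cases hk : ((k : G))⁻¹ • x ∈ D
        · have hxk : x ∈ (fun z : X => (k : G) • z) '' D :=
            ⟨(k : G)⁻¹ • x, hk, smul_inv_smul _ _⟩
          rw [Set.indicator_of_mem
              (show x ∈ D ∩ (fun z : X => (k : G) • z) '' D from ⟨hx, hxk⟩),
            Set.indicator_of_mem (show k ∈ F from hk)]
        · have hxk : x ∉ (fun z : X => (k : G) • z) '' D := by
            rintro ⟨z, hz, hzx⟩
            apply hk; rw [← hzx, inv_smul_smul]; exact hz
          rw [Set.indicator_of_notMem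
              (show x ∉ D ∩ (fun z : X => (k : G) • z) '' D from fun hmem => hxk hmem.2),
            Set.indicator_of_notMem (show k ∉ F from hk)]
      rw [tsum_congr hterm, ← tsum_subtype F (fun _ => f x)]
      haveI := Fintype.ofFinite ↥F
      rw [tsum_fintype, Finset.sum_const, nsmul_eq_mul, Set.indicator_of_mem hx]
      congr 1
      rw [← hcard, Nat.card_eq_fintype_card]
      simp
    · rw [Set.indicator_of_notMem hx, mul_zero, ENNReal.tsum_eq_zero]
      intro k
      exact Set.indicator_of_notMem (fun hmem => hx hmem.1) _
  -- summing the integrals over T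
  have hsum2 : (∑' k : ↥T, ∫⁻ x in D ∩ (fun z : X => (k : G) • z) '' D, f x ∂μ)
      = (RGamma Γ g⁻¹ : ℝ≥0∞) * ∫⁻ x in D, f x ∂μ := by
    have hmeasint : ∀ k : ↥T, MeasurableSet (D ∩ (fun z : X => (k : G) • z) '' D) :=
      fun k => hDmeas.inter (mimg _)
    calc (∑' k : ↥T, ∫⁻ x in D ∩ (fun z : X => (k : G) • z) '' D, f x ∂μ)
        = ∑' k : ↥T, ∫⁻ x, (D ∩ (fun z : X => (k : G) • z) '' D).indicator f x ∂μ :=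
          tsum_congr fun k => (lintegral_indicator (hmeasint k) _).symm
      _ = ∫⁻ x, ∑' k : ↥T, (D ∩ (fun z : X => (k : G) • z) '' D).indicator f x ∂μ :=
          (lintegral_tsum fun k => (hf.indicator (hmeasint k)).aemeasurable).symm
      _ = ∫⁻ x, (RGamma Γ g⁻¹ : ℝ≥0∞) * D.indicator f x ∂μ := lintegral_congr hpt
      _ = (RGamma Γ g⁻¹ : ℝ≥0∞) * ∫⁻ x, D.indicator f x ∂μ :=
          lintegral_const_mul _ (hf.indicator hDmeas)
      _ = (RGamma Γ g⁻¹ : ℝ≥0∞) * ∫⁻ x in D, f x ∂μ := by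
          rw [lintegral_indicator hDmeas]
  -- decomposition of the integral over h • D
  have hdecomp : ∀ h : G, ∫⁻ x in (fun z : X => h • z) '' D, f x ∂μ
      = ∑' γ : Γ, ∫⁻ x in D ∩ (fun z : X => ((γ : G) * h) • z) '' D, f x ∂μ := by
    intro h
    set A : Γ → Set X :=
      fun γ => ((fun z : X => h • z) '' D) ∩ ((fun z : X => (γ : G) • z) ⁻¹' D) with hAdef
    have hmA : ∀ γ : Γ, MeasurableSet (A γ) := fun γ => (mimg h).inter (msmul _ hDmeas)
    have hptd : ∀ y : X, ((fun z : X => h • z) '' D).indicator f y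
        = ∑' γ : Γ, (A γ).indicator f y := by
      intro y
      by_cases hy : y ∈ (fun z : X => h • z) '' D
      · obtain ⟨γ₀, hγ₀, huγ⟩ := huniq y
        rw [tsum_eq_single γ₀ ?_]
        · rw [Set.indicator_of_mem hy, Set.indicator_of_mem (show y ∈ A γ₀ from ⟨hy, hγ₀⟩)]
        · intro γ hγ
          have : y ∉ (fun z : X => (γ : G) • z) ⁻¹' D := fun hmem => hγ (huγ γ hmem)
          exact Set.indicator_of_notMem (fun hmem => this hmem.2) _
      · rw [Set.indicator_of_notMem hy, eq_comm, ENNReal.tsum_eq_zero]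
        intro γ
        exact Set.indicator_of_notMem (fun hmem => hy hmem.1) _
    have hsetγ : ∀ γ : Γ, (fun z : X => (γ : G) • z) '' (A γ)
        = D ∩ (fun z : X => ((γ : G) * h) • z) '' D := by
      intro γ
      rw [hAdef]
      rw [Set.image_inter (MulAction.injective ((γ : G)))]
      rw [Set.image_preimage_eq _ (MulAction.bijective ((γ : G))).surjective]
      rw [Set.inter_comm]
      have hcomp : ((fun x : X => (γ : G) • x) ∘ fun z : X => h • z)
          = fun z : X => ((γ : G) * h) • z := by
        funext z
        exact (mul_smul (γ : G) h z).symm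
      rw [← Set.image_comp, hcomp]
    calc ∫⁻ x in (fun z : X => h • z) '' D, f x ∂μ
        = ∫⁻ x, ((fun z : X => h • z) '' D).indicator f x ∂μ :=
          (lintegral_indicator (mimg h) _).symm
      _ = ∫⁻ x, ∑' γ : Γ, (A γ).indicator f x ∂μ := lintegral_congr hptd
      _ = ∑' γ : Γ, ∫⁻ x, (A γ).indicator f x ∂μ :=
          lintegral_tsum fun γ => (hf.indicator (hmA γ)).aemeasurable
      _ = ∑' γ : Γ, ∫⁻ x in A γ, f x ∂μ :=
          tsum_congr fun γ => lintegral_indicator (hmA γ) _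
      _ = ∑' γ : Γ, ∫⁻ x in A γ, f ((γ : G) • x) ∂μ :=
          tsum_congr fun γ => lintegral_congr fun x => (hfinv _ γ.2 x).symm
      _ = ∑' γ : Γ, ENNReal.ofReal (N (γ : G) ^ β)
            * ∫⁻ x in (fun z : X => (γ : G) • z) '' (A γ), f x ∂μ :=
          tsum_congr fun γ =>
            lintegral_comp_smul hcont N hN β μ hscale (γ : G) f hf (A γ) (hmA γ)
      _ = ∑' γ : Γ, ∫⁻ x in D ∩ (fun z : X => ((γ : G) * h) • z) '' D, f x ∂μ := by
          refine tsum_congr fun γ => ?_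
          rw [hNΓ _ γ.2, Real.one_rpow, ENNReal.ofReal_one, one_mul, hsetγ γ]
  -- representatives of the cosets
  have hrep : ∀ C : ↥(rightCosetsIn Γ g), ∃ h : G, h ∈ T ∧ h ∈ (C : Set G) ∧
      (C : Set G) = {y : G | ∃ γ : Γ, y = (γ : G) * h} := by
    rintro ⟨C, x₀, hx₀, rfl⟩
    exact ⟨x₀, hx₀, ⟨1, by simp⟩, rfl⟩
  set rep : ↥(rightCosetsIn Γ g) → G := fun C => (hrep C).choose with hrepdef
  have hrepT : ∀ C : ↥(rightCosetsIn Γ g), rep C ∈ T := fun C => (hrep C).choose_spec.1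
  have hrepC : ∀ C : ↥(rightCosetsIn Γ g), rep C ∈ (C : Set G) := fun C => (hrep C).choose_spec.2.1
  have hrepE : ∀ C : ↥(rightCosetsIn Γ g), (C : Set G) = {y : G | ∃ γ : Γ, y = (γ : G) * rep C} :=
    fun C => (hrep C).choose_spec.2.2
  -- the supremum over a coset is the value at the representative
  have hsup : ∀ (C : ↥(rightCosetsIn Γ g)) (x : X),
      (⨆ h ∈ (C : Set G), f (h • x)) = f (rep C • x) := by
    intro C x
    apply le_antisymm
    · refine iSup₂_le fun h hh => ?_
      rw [hrepE C] at hh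
      obtain ⟨γ, rfl⟩ := hh
      rw [mul_smul, hfinv _ γ.2]
    · exact le_iSup₂ (f := fun (h : G) (_ : h ∈ (C : Set G)) => f (h • x)) (rep C) (hrepC C)
  haveI : Finite ↥(rightCosetsIn Γ g) := (hHecke g).to_subtype
  -- the bijection (C, γ) ↦ γ * rep C onto T
  have heT : ∀ (C : ↥(rightCosetsIn Γ g)) (γ : Γ), (γ : G) * rep C ∈ T := by
    intro C γ
    obtain ⟨γ₁, γ₂, hh⟩ := hrepT C
    exact ⟨γ * γ₁, γ₂, by rw [hh]; simp [mul_assoc]⟩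
  set e : ↥(rightCosetsIn Γ g) × Γ → ↥T := fun p => ⟨(p.2 : G) * rep p.1, heT p.1 p.2⟩
    with hedef
  have hebij : Function.Bijective e := by
    constructor
    · rintro ⟨C₁, γ₁⟩ ⟨C₂, γ₂⟩ hpq
      have h' : (γ₁ : G) * rep C₁ = (γ₂ : G) * rep C₂ := congrArg Subtype.val hpq
      have hr : rep C₂ = ((γ₂⁻¹ * γ₁ : Γ) : G) * rep C₁ := by
        push_cast
        rw [mul_assoc, h', inv_mul_cancel_left]
      have hC : C₁ = C₂ := by
        apply Subtype.ext
        rw [hrepE C₁, hrepE C₂]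
        exact hcoset_eq (rep C₁) (rep C₂) ⟨γ₂⁻¹ * γ₁, hr⟩
      subst hC
      have hγ : γ₁ = γ₂ := by
        have := mul_right_cancel h'
        exact Subtype.ext this
      rw [hγ]
    · rintro ⟨k, hkT⟩
      obtain ⟨γ₁, γ₂, hk⟩ := hkT
      have hCmem : ({y : G | ∃ γ : Γ, y = (γ : G) * k} : Set G) ∈ rightCosetsIn Γ g :=
        ⟨k, ⟨γ₁, γ₂, hk⟩, rfl⟩
      set C : ↥(rightCosetsIn Γ g) := ⟨_, hCmem⟩ with hCdef
      have hkC : k ∈ (C : Set G) := ⟨1, by simp⟩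
      rw [hrepE C] at hkC
      obtain ⟨γ, hγ⟩ := hkC
      exact ⟨(C, γ), Subtype.ext hγ.symm⟩
  -- put everything together
  have hhecke_eq : ∀ x : X, heckeT Γ g f x
      = (RGamma Γ g : ℝ≥0∞)⁻¹ * ∑' C : ↥(rightCosetsIn Γ g), f (rep C • x) := by
    intro x
    unfold heckeT
    rw [tsum_congr fun C => hsup C x]
  have hNrep : ∀ C : ↥(rightCosetsIn Γ g), N (rep C) = N g := fun C => hNT _ (hrepT C)
  have key : ∫⁻ x in D, heckeT Γ g f x ∂μ
      = (RGamma Γ g : ℝ≥0∞)⁻¹ * (ENNReal.ofReal (N g ^ β)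
          * ((RGamma Γ g⁻¹ : ℝ≥0∞) * ∫⁻ x in D, f x ∂μ)) := by
    calc ∫⁻ x in D, heckeT Γ g f x ∂μ
        = ∫⁻ x in D, (RGamma Γ g : ℝ≥0∞)⁻¹
            * ∑' C : ↥(rightCosetsIn Γ g), f (rep C • x) ∂μ :=
          lintegral_congr fun x => hhecke_eq x
      _ = (RGamma Γ g : ℝ≥0∞)⁻¹
            * ∫⁻ x in D, ∑' C : ↥(rightCosetsIn Γ g), f (rep C • x) ∂μ :=
          lintegral_const_mul _ (Measurable.ennreal_tsum fun C => hf.comp (msmul _))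
      _ = (RGamma Γ g : ℝ≥0∞)⁻¹
            * ∑' C : ↥(rightCosetsIn Γ g), ∫⁻ x in D, f (rep C • x) ∂μ := by
          rw [lintegral_tsum (f := fun (C : ↥(rightCosetsIn Γ g)) (x : X) => f (rep C • x))
            (fun C => (hf.comp (msmul (rep C))).aemeasurable)]
      _ = (RGamma Γ g : ℝ≥0∞)⁻¹ * ∑' C : ↥(rightCosetsIn Γ g),
            ENNReal.ofReal (N g ^ β)
              * ∑' γ : Γ, ∫⁻ x in D ∩ (fun z : X => ((γ : G) * rep C) • z) '' D, f x ∂μ := by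
          congr 1
          refine tsum_congr fun C => ?_
          rw [lintegral_comp_smul hcont N hN β μ hscale (rep C) f hf D hDmeas,
            hNrep C, hdecomp (rep C)]
      _ = (RGamma Γ g : ℝ≥0∞)⁻¹ * (ENNReal.ofReal (N g ^ β)
            * ∑' C : ↥(rightCosetsIn Γ g), ∑' γ : Γ,
                ∫⁻ x in D ∩ (fun z : X => ((γ : G) * rep C) • z) '' D, f x ∂μ) := by
          rw [ENNReal.tsum_mul_left]
      _ = (RGamma Γ g : ℝ≥0∞)⁻¹ * (ENNReal.ofReal (N g ^ β)
            * ∑' k : ↥T, ∫⁻ x in D ∩ (fun z : X => (k : G) • z) '' D, f x ∂μ) := by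
          congr 2
          rw [← (Equiv.ofBijective e hebij).tsum_eq
            (fun k : ↥T => ∫⁻ x in D ∩ (fun z : X => (k : G) • z) '' D, f x ∂μ)]
          rw [← ENNReal.tsum_prod]
          rfl
      _ = (RGamma Γ g : ℝ≥0∞)⁻¹ * (ENNReal.ofReal (N g ^ β)
            * ((RGamma Γ g⁻¹ : ℝ≥0∞) * ∫⁻ x in D, f x ∂μ)) := by rw [hsum2]
  rw [key]
  have hNgβ : 0 ≤ N g ^ β := Real.rpow_nonneg (hN g).le β
  rw [ENNReal.ofReal_mul (by positivity), ENNReal.ofReal_div_of_pos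
    (by exact_mod_cast Nat.pos_of_ne_zero hRpos), ENNReal.ofReal_natCast,
    ENNReal.ofReal_natCast, div_eq_mul_inv]
  ring
end

section
/- Let a countable group G act freely by Borel automorphisms on a standard Borel space X with Γ ≤ G such that (G,Γ) is a Hecke pair, let N : G → (0,∞) be a homomorphism with N(γ) = 1 for all γ ∈ Γ, and let β ∈ ℝ. Let Y ⊆ X be a Γ-invariant Borel set and μ a Borel measure concentrated on Y with μ(gW) = N(g)^(−β)·μ(W) for every g ∈ G and Borel W ⊆ Y with gW ⊆ Y. Let Y₀ ⊆ Y be a Γ-invariant Borel set such that gY₀ ∩ Y₀ ≠ ∅ (g ∈ G) implies g ∈ Γ. Then for every g ∈ G with gY₀ ⊆ Y, every Γ-invariant Borel set Z ⊆ Y₀, every Γ-invariant measurable f : Y → [0,∞], and every Borel Γ-transversal D of Y: ∫_{D ∩ ΓgZ} f dμ = N(g)^(−β) · R_Γ(g) · ∫_{D ∩ Z} (T_g f) dμ, where ΓgZ = {γgz : γ ∈ Γ, z ∈ Z}. In particular μ(D ∩ ΓgZ) = N(g)^(−β) · R_Γ(g) · μ(D ∩ Z). -/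
open MeasureTheory
open scoped ENNReal

private lemma img_measurable' {G X : Type*} [Group G] [MeasurableSpace X] [MulAction G X]
    (hmeas : ∀ g : G, Measurable fun x : X => g • x) (a : G) {A : Set X}
    (hA : MeasurableSet A) : MeasurableSet ((a • ·) '' A) := by
  have h : (a • ·) '' A = (a⁻¹ • ·) ⁻¹' A := by
    ext x
    constructor
    · rintro ⟨y, hy, rfl⟩
      simpa using hy
    · intro hx
      exact ⟨a⁻¹ • x, hx, by simp⟩
  rw [h]
  exact hmeas a⁻¹ hA

private lemma lintegral_image_smul' {G X : Type*} [Group G] [MeasurableSpace X] [MulAction G X]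
    (hmeas : ∀ g : G, Measurable fun x : X => g • x)
    (μ : Measure X) (c : ℝ≥0∞) (h : G) (W : Set X) (hW : MeasurableSet W)
    (hsc : ∀ A : Set X, MeasurableSet A → A ⊆ W → μ ((h • ·) '' A) = c * μ A)
    (f : X → ℝ≥0∞) (hf : Measurable f) :
    ∫⁻ x in (h • ·) '' W, f x ∂μ = c * ∫⁻ x in W, f (h • x) ∂μ := by
  have hmap : μ.restrict ((h • ·) '' W) = Measure.map (h • ·) (c • μ.restrict W) := by
    ext A hA
    rw [Measure.restrict_apply hA, Measure.map_apply (hmeas h) hA, Measure.smul_apply,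
      Measure.restrict_apply (hmeas h hA), smul_eq_mul]
    have key := hsc (W ∩ (h • ·) ⁻¹' A) (hW.inter (hmeas h hA)) Set.inter_subset_left
    rw [Set.image_inter_preimage] at key
    rw [Set.inter_comm A, Set.inter_comm ((h • ·) ⁻¹' A) W]
    exact key
  rw [hmap, lintegral_map hf (hmeas h), lintegral_smul_measure, smul_eq_mul]

private lemma lintegral_transversal_eq' {G X : Type*} [Group G] [Countable G]
    [MeasurableSpace X] [MulAction G X]
    (hmeas : ∀ g : G, Measurable fun x : X => g • x)
    (hfree : ∀ (g : G) (x : X), g • x = x → g = 1)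
    (Γ : Subgroup G) (μ : Measure X) (Y : Set X)
    (hsc : ∀ γ ∈ Γ, ∀ A : Set X, MeasurableSet A → A ⊆ Y → (γ • ·) '' A ⊆ Y →
      μ ((γ • ·) '' A) = μ A)
    (f : X → ℝ≥0∞) (hf : Measurable f)
    (hfinv : ∀ γ ∈ Γ, ∀ x : X, f (γ • x) = f x)
    (W : Set X) (hWY : W ⊆ Y)
    (D₁ D₂ : Set X) (h₁ : IsBorelTransversal Γ W D₁) (h₂ : IsBorelTransversal Γ W D₂) :
    ∫⁻ x in D₁, f x ∂μ = ∫⁻ x in D₂, f x ∂μ := by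
  set A : Γ → Set X := fun γ => D₁ ∩ (fun x => (γ : G) • x) ⁻¹' D₂ with hAdef
  have hAm : ∀ γ : Γ, MeasurableSet (A γ) := fun γ => h₁.1.inter (hmeas (γ : G) h₂.1)
  have hAD₁ : ∀ γ : Γ, A γ ⊆ D₁ := fun γ => Set.inter_subset_left
  have himg : ∀ γ : Γ, ((γ : G) • ·) '' (A γ) ⊆ D₂ := by
    rintro γ x ⟨y, ⟨-, hy2⟩, rfl⟩
    exact hy2
  have hU1 : D₁ = ⋃ γ : Γ, A γ := by
    ext x
    simp only [Set.mem_iUnion]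
    constructor
    · intro hx
      obtain ⟨d, ⟨hdD, γ, hγ⟩, -⟩ := h₂.2.2 x (h₁.2.1 hx)
      refine ⟨γ, hx, ?_⟩
      show (γ : G) • x ∈ D₂
      rw [hγ]; exact hdD
    · rintro ⟨γ, hx, -⟩
      exact hx
  have hU2 : D₂ = ⋃ γ : Γ, ((γ : G) • ·) '' (A γ) := by
    ext d
    simp only [Set.mem_iUnion]
    constructor
    · intro hd
      obtain ⟨x, ⟨hxD₁, δ, hδ⟩, -⟩ := h₁.2.2 d (h₂.2.1 hd)
      have hinv : ((δ⁻¹ : Γ) : G) • x = d := by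
        rw [← hδ]
        simp
      refine ⟨δ⁻¹, x, ⟨hxD₁, ?_⟩, hinv⟩
      show ((δ⁻¹ : Γ) : G) • x ∈ D₂
      rw [hinv]; exact hd
    · rintro ⟨γ, x, hxA, rfl⟩
      exact himg γ ⟨x, hxA, rfl⟩
  have hcoeq : ∀ (γ γ' : Γ) (x : X), (γ : G) • x = (γ' : G) • x → γ = γ' := by
    intro γ γ' x hx
    have h0 : ((γ' : G)⁻¹ * (γ : G)) • x = x := by
      rw [mul_smul, hx, inv_smul_smul]
    have h1 := hfree _ _ h0
    exact Subtype.ext (inv_mul_eq_one.mp h1).symm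
  have hd1 : Pairwise (Function.onFun Disjoint A) := by
    intro γ γ' hne
    rw [Function.onFun, Set.disjoint_left]
    intro x hx hx'
    apply hne
    obtain ⟨d, -, hu⟩ := h₂.2.2 x (h₁.2.1 hx.1)
    have e1 := hu _ ⟨hx.2, γ, rfl⟩
    have e2 := hu _ ⟨hx'.2, γ', rfl⟩
    exact hcoeq γ γ' x (e1.trans e2.symm)
  have hd2 : Pairwise (Function.onFun Disjoint fun γ : Γ => ((γ : G) • ·) '' (A γ)) := by
    intro γ γ' hne
    rw [Function.onFun, Set.disjoint_left]
    rintro d ⟨x, hxA, rfl⟩ ⟨x', hx'A, hxx⟩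
    apply hne
    have hxD := hAD₁ γ hxA
    have hx'D := hAD₁ γ' hx'A
    obtain ⟨e, -, hu⟩ := h₁.2.2 x (h₁.2.1 hxD)
    have e1 := hu x ⟨hxD, 1, one_smul _ _⟩
    have hxx2 : (γ' : G) • x' = (γ : G) • x := hxx
    have hmem : ((γ'⁻¹ * γ : Γ) : G) • x = x' := by
      push_cast
      rw [mul_smul, ← hxx2, inv_smul_smul]
    have e2 := hu x' ⟨hx'D, γ'⁻¹ * γ, hmem⟩
    have hxx' : x = x' := e1.trans e2.symm
    subst hxx'
    exact (hcoeq γ' γ x hxx2).symm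
  calc ∫⁻ x in D₁, f x ∂μ = ∑' γ : Γ, ∫⁻ x in A γ, f x ∂μ := by
        rw [hU1]; exact lintegral_iUnion hAm hd1 f
    _ = ∑' γ : Γ, ∫⁻ x in ((γ : G) • ·) '' (A γ), f x ∂μ := by
        refine tsum_congr fun γ => ?_
        have hsc' : ∀ B : Set X, MeasurableSet B → B ⊆ A γ →
            μ (((γ : G) • ·) '' B) = 1 * μ B := by
          intro B hB hBA
          rw [one_mul]
          refine hsc (γ : G) γ.2 B hB (fun x hx => hWY (h₁.2.1 (hAD₁ γ (hBA hx)))) ?_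
          intro x hx
          exact hWY (h₂.2.1 (himg γ (Set.image_mono hBA hx)))
        have h := lintegral_image_smul' hmeas μ 1 (γ : G) (A γ) (hAm γ) hsc' f hf
        rw [one_mul] at h
        rw [h]
        exact (setLIntegral_congr_fun (hAm γ)
          (fun x _ => hfinv (γ : G) γ.2 x)).symm
    _ = ∫⁻ x in D₂, f x ∂μ := by
        rw [hU2]
        exact (lintegral_iUnion (fun γ => img_measurable' hmeas _ (hAm γ)) hd2 f).symm

theorem lintegral_on_gamma_g_Z
    {G X : Type*} [Group G] [Countable G]
    [MeasurableSpace X] [StandardBorelSpace X]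
    [MulAction G X] (hmeas : ∀ g : G, Measurable fun x : X => g • x)
    (hfree : ∀ (g : G) (x : X), g • x = x → g = 1)
    (Γ : Subgroup G) (hHecke : ∀ g : G, (rightCosetsIn Γ g).Finite)
    (N : G →* ℝ) (hN : ∀ g : G, 0 < N g) (hNΓ : ∀ γ ∈ Γ, N γ = 1) (β : ℝ)
    (Y : Set X) (hYmeas : MeasurableSet Y) (hYinv : ∀ γ ∈ Γ, (γ • ·) '' Y = Y)
    (μ : Measure X) (hconc : μ Yᶜ = 0)
    (hscale : ∀ (g : G) (W : Set X), MeasurableSet W → W ⊆ Y → (g • ·) '' W ⊆ Y →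
      μ ((g • ·) '' W) = ENNReal.ofReal (N g ^ (-β)) * μ W)
    (Y₀ : Set X) (hY₀meas : MeasurableSet Y₀) (hY₀Y : Y₀ ⊆ Y)
    (hY₀inv : ∀ γ ∈ Γ, (γ • ·) '' Y₀ = Y₀)
    (hi : ∀ g : G, ((g • ·) '' Y₀ ∩ Y₀).Nonempty → g ∈ Γ)
    (g : G) (hgY₀ : (g • ·) '' Y₀ ⊆ Y)
    (Z : Set X) (hZmeas : MeasurableSet Z) (hZY₀ : Z ⊆ Y₀)
    (hZinv : ∀ γ ∈ Γ, (γ • ·) '' Z = Z)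
    (f : X → ℝ≥0∞) (hf : Measurable f)
    (hfinv : ∀ γ ∈ Γ, ∀ x : X, f (γ • x) = f x)
    (D : Set X) (hD : IsBorelTransversal Γ Y D) :
    (∫⁻ x in D ∩ {x | ∃ (γ : Γ) (z : X), z ∈ Z ∧ x = ((γ : G) * g) • z}, f x ∂μ =
        ENNReal.ofReal (N g ^ (-β)) * (RGamma Γ g : ℝ≥0∞) *
          ∫⁻ x in D ∩ Z, heckeT Γ g f x ∂μ) ∧
      μ (D ∩ {x | ∃ (γ : Γ) (z : X), z ∈ Z ∧ x = ((γ : G) * g) • z}) =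
        ENNReal.ofReal (N g ^ (-β)) * (RGamma Γ g : ℝ≥0∞) * μ (D ∩ Z) := by
  classical
  haveI hSfin : Finite ↥(rightCosetsIn Γ g) := (hHecke g).to_subtype
  haveI hSfin' : Fintype ↥(rightCosetsIn Γ g) := (hHecke g).fintype
  haveI hSne : Nonempty ↥(rightCosetsIn Γ g) :=
    ⟨⟨{y | ∃ γ : Γ, y = (γ : G) * g}, g, ⟨1, 1, by simp⟩, rfl⟩⟩
  set c : ℝ≥0∞ := ENNReal.ofReal (N g ^ (-β)) with hcdef
  have hn0 : ((RGamma Γ g : ℕ) : ℝ≥0∞) ≠ 0 := by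
    have h0 : 0 < RGamma Γ g := by
      unfold RGamma
      exact Nat.card_pos
    exact_mod_cast h0.ne'
  have hntop : ((RGamma Γ g : ℕ) : ℝ≥0∞) ≠ ⊤ := ENNReal.natCast_ne_top _
  -- representatives
  have hrep : ∀ C : ↥(rightCosetsIn Γ g), ∃ x : G,
      (∃ γ₁ γ₂ : Γ, x = (γ₁ : G) * g * (γ₂ : G)) ∧
      (C : Set G) = {y | ∃ γ : Γ, y = (γ : G) * x} := fun C => C.2
  set rep : ↥(rightCosetsIn Γ g) → G := fun C => (hrep C).choose with hrepdef
  have hrep1 : ∀ C : ↥(rightCosetsIn Γ g), ∃ γ₁ γ₂ : Γ, rep C = (γ₁ : G) * g * (γ₂ : G) :=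
    fun C => (hrep C).choose_spec.1
  have hrep2 : ∀ C : ↥(rightCosetsIn Γ g), (C : Set G) = {y | ∃ γ : Γ, y = (γ : G) * rep C} :=
    fun C => (hrep C).choose_spec.2
  -- membership helpers
  have hYmem : ∀ γ ∈ Γ, ∀ y ∈ Y, γ • y ∈ Y := by
    intro γ hγ y hy
    rw [← hYinv γ hγ]
    exact ⟨y, hy, rfl⟩
  have hZmem : ∀ γ ∈ Γ, ∀ z ∈ Z, γ • z ∈ Z := by
    intro γ hγ z hz
    rw [← hZinv γ hγ]
    exact ⟨z, hz, rfl⟩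
  have hkey : ∀ (s : G) (w w' : X), w ∈ Y₀ → w' ∈ Y₀ → s • w = w' → s ∈ Γ := by
    intro s w w' hw hw' hsw
    exact hi s ⟨w', ⟨w, hw, hsw⟩, hw'⟩
  set T : Set X := {x | ∃ (γ : Γ) (z : X), z ∈ Z ∧ x = ((γ : G) * g) • z} with hTdef
  set W₀ : Set X := D ∩ Z with hW₀def
  have hW₀meas : MeasurableSet W₀ := hD.1.inter hZmeas
  have hW₀Z : W₀ ⊆ Z := Set.inter_subset_right
  have hW₀D : W₀ ⊆ D := Set.inter_subset_left
  have hW₀Y₀ : W₀ ⊆ Y₀ := fun x hx => hZY₀ (hW₀Z hx)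
  have hW₀Y : W₀ ⊆ Y := fun x hx => hY₀Y (hW₀Y₀ hx)
  have hsameD : ∀ w ∈ D, ∀ w' ∈ D, w ∈ Y → (∃ γ : Γ, (γ : G) • w = w') → w = w' := by
    intro w hw w' hw' hwY hex
    obtain ⟨d, -, hu⟩ := hD.2.2 w hwY
    have e1 := hu w ⟨hw, 1, one_smul _ _⟩
    have e2 := hu w' ⟨hw', hex⟩
    exact e1.trans e2.symm
  have hDD : ∀ (a b : G) (w : X), w ∈ W₀ → ∀ w' : X, w' ∈ W₀ → a • w = b • w' →
      a = b ∧ w = w' := by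
    intro a b w hw w' hw' hab
    have hsw : (b⁻¹ * a) • w = w' := by
      rw [mul_smul, hab, inv_smul_smul]
    have hsΓ : b⁻¹ * a ∈ Γ := hkey _ w w' (hW₀Y₀ hw) (hW₀Y₀ hw') hsw
    have hww' : w = w' := hsameD w (hW₀D hw) w' (hW₀D hw') (hW₀Y hw) ⟨⟨_, hsΓ⟩, hsw⟩
    subst hww'
    have h1 := hfree _ _ hsw
    rw [inv_mul_eq_one] at h1
    exact ⟨h1.symm, rfl⟩
  have hCeq : ∀ C C' : ↥(rightCosetsIn Γ g), (∃ γ : Γ, rep C' = (γ : G) * rep C) → C = C' := by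
    rintro C C' ⟨γ, hγ⟩
    apply Subtype.ext
    have hs : ({y | ∃ δ : Γ, y = (δ : G) * rep C} : Set G)
        = {y | ∃ δ : Γ, y = (δ : G) * rep C'} := by
      ext y
      constructor
      · rintro ⟨δ, rfl⟩
        exact ⟨δ * γ⁻¹, by push_cast; rw [hγ]; group⟩
      · rintro ⟨δ, rfl⟩
        exact ⟨δ * γ, by push_cast; rw [hγ]; group⟩
    rw [hrep2 C, hrep2 C']
    exact hs
  set WC : ↥(rightCosetsIn Γ g) → Set X :=
    fun C => {x | ∃ (γ : Γ) (w : X), w ∈ W₀ ∧ x = ((γ : G) * rep C) • w} with hWCdef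
  have hWCunion : ∀ C : ↥(rightCosetsIn Γ g), WC C = ⋃ γ : Γ, (((γ : G) * rep C) • ·) '' W₀ := by
    intro C
    ext x
    simp only [hWCdef, Set.mem_iUnion, Set.mem_image, Set.mem_setOf_eq]
    constructor
    · rintro ⟨γ, w, hw, rfl⟩; exact ⟨γ, w, hw, rfl⟩
    · rintro ⟨γ, w, hw, rfl⟩; exact ⟨γ, w, hw, rfl⟩
  have hWCmeas : ∀ C : ↥(rightCosetsIn Γ g), MeasurableSet (WC C) := by
    intro C
    rw [hWCunion C]
    exact MeasurableSet.iUnion fun γ => img_measurable' hmeas _ hW₀meas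
  have hrepY : ∀ (C : ↥(rightCosetsIn Γ g)) (γ : Γ) (w : X), w ∈ W₀ → ((γ : G) * rep C) • w ∈ Y := by
    intro C γ w hw
    obtain ⟨γ₁, γ₂, hC⟩ := hrep1 C
    have h2 : (γ₂ : G) • w ∈ Y₀ := hZY₀ (hZmem _ γ₂.2 w (hW₀Z hw))
    have h3 : g • ((γ₂ : G) • w) ∈ Y := hgY₀ ⟨_, h2, rfl⟩
    have h4 : ((γ : G) * γ₁) • (g • ((γ₂ : G) • w)) ∈ Y :=
      hYmem _ (mul_mem γ.2 γ₁.2) _ h3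
    have heqn : ((γ : G) * rep C) • w = ((γ : G) * (γ₁ : G)) • (g • ((γ₂ : G) • w)) := by
      rw [hC]
      simp only [smul_smul]
      congr 1
      group
    rw [heqn]
    exact h4
  have hWCY : ∀ C : ↥(rightCosetsIn Γ g), WC C ⊆ Y := by
    rintro C x ⟨γ, w, hw, rfl⟩
    exact hrepY C γ w hw
  have hWCinv : ∀ (C : ↥(rightCosetsIn Γ g)) (δ : Γ) (x : X), x ∈ WC C → (δ : G) • x ∈ WC C := by
    rintro C δ x ⟨γ, w, hw, rfl⟩
    refine ⟨δ * γ, w, hw, ?_⟩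
    push_cast
    rw [smul_smul, mul_assoc]
  have htransD : ∀ C : ↥(rightCosetsIn Γ g), IsBorelTransversal Γ (WC C) (D ∩ WC C) := by
    intro C
    refine ⟨hD.1.inter (hWCmeas C), Set.inter_subset_right, ?_⟩
    intro x hx
    obtain ⟨d, ⟨hdD, γ, hγ⟩, hu⟩ := hD.2.2 x (hWCY C hx)
    refine ⟨d, ⟨⟨hdD, ?_⟩, γ, hγ⟩, ?_⟩
    · rw [← hγ]; exact hWCinv C γ x hx
    · rintro d' ⟨⟨hd'D, -⟩, hex⟩
      exact hu d' ⟨hd'D, hex⟩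
  have htransE : ∀ C : ↥(rightCosetsIn Γ g), IsBorelTransversal Γ (WC C) ((rep C • ·) '' W₀) := by
    intro C
    refine ⟨img_measurable' hmeas _ hW₀meas, ?_, ?_⟩
    · rintro x ⟨w, hw, rfl⟩
      exact ⟨1, w, hw, by simp⟩
    · rintro x ⟨γ, w, hw, rfl⟩
      refine ⟨rep C • w, ⟨⟨w, hw, rfl⟩, γ⁻¹, ?_⟩, ?_⟩
      · rw [smul_smul]
        congr 1
        push_cast
        group
      · rintro d' ⟨⟨w', hw', rfl⟩, δ, hδ⟩
        have heq : ((δ : G) * ((γ : G) * rep C)) • w = rep C • w' := by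
          rw [mul_smul]; exact hδ
        obtain ⟨-, hww'⟩ := hDD _ _ w hw w' hw' heq
        rw [hww']
  have hVdisj : Pairwise (Function.onFun Disjoint fun C : ↥(rightCosetsIn Γ g) => D ∩ WC C) := by
    intro C C' hne
    rw [Function.onFun, Set.disjoint_left]
    rintro x ⟨hxD, γ, w, hw, rfl⟩ ⟨-, γ', w', hw', hx'⟩
    apply hne
    obtain ⟨hab, -⟩ := hDD _ _ w hw w' hw' hx'
    refine hCeq C C' ⟨γ'⁻¹ * γ, ?_⟩
    push_cast
    rw [mul_assoc, hab]
    group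
  have hsetEq : D ∩ T = ⋃ C : ↥(rightCosetsIn Γ g), (D ∩ WC C) := by
    ext x
    simp only [Set.mem_iUnion]
    constructor
    · rintro ⟨hxD, hxT⟩
      simp only [hTdef, Set.mem_setOf_eq] at hxT
      obtain ⟨γ, z, hz, rfl⟩ := hxT
      obtain ⟨d, ⟨hdD, δ, hδ⟩, -⟩ := hD.2.2 z (hY₀Y (hZY₀ hz))
      have hdZ : d ∈ Z := by
        rw [← hδ]; exact hZmem _ δ.2 z hz
      have hdW₀ : d ∈ W₀ := ⟨hdD, hdZ⟩
      have hC₀ : ({y | ∃ ε : Γ, y = (ε : G) * ((γ : G) * g * (δ : G)⁻¹)} : Set G)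
          ∈ rightCosetsIn Γ g := ⟨(γ : G) * g * (δ : G)⁻¹, ⟨γ, δ⁻¹, by simp⟩, rfl⟩
      set C : ↥(rightCosetsIn Γ g) := ⟨_, hC₀⟩ with hCv
      have haC : (γ : G) * g * (δ : G)⁻¹ ∈ (C : Set G) := ⟨1, by simp⟩
      rw [hrep2 C] at haC
      obtain ⟨ε, hε⟩ := haC
      refine ⟨C, hxD, ε, d, hdW₀, ?_⟩
      rw [← hε, ← hδ, smul_smul]
      congr 1
      group
    · rintro ⟨C, hxD, γ, w, hw, rfl⟩
      obtain ⟨γ₁, γ₂, hC⟩ := hrep1 C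
      refine ⟨hxD, ?_⟩
      simp only [hTdef, Set.mem_setOf_eq]
      refine ⟨γ * γ₁, (γ₂ : G) • w, hZmem _ γ₂.2 w (hW₀Z hw), ?_⟩
      rw [hC]
      push_cast
      simp only [smul_smul]
      congr 1
      group
  have hscΓ : ∀ γ ∈ Γ, ∀ A : Set X, MeasurableSet A → A ⊆ Y → (γ • ·) '' A ⊆ Y →
      μ ((γ • ·) '' A) = μ A := by
    intro γ hγ A hA h1 h2
    rw [hscale γ A hA h1 h2, hNΓ γ hγ, Real.one_rpow, ENNReal.ofReal_one, one_mul]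
  have hsupF : ∀ F : X → ℝ≥0∞, (∀ γ ∈ Γ, ∀ x : X, F (γ • x) = F x) →
      ∀ (x : X) (C : ↥(rightCosetsIn Γ g)),
      (⨆ h ∈ (C : Set G), F (h • x)) = F (rep C • x) := by
    intro F hFinv x C
    apply le_antisymm
    · refine iSup₂_le fun h hh => ?_
      rw [hrep2 C] at hh
      obtain ⟨γ, rfl⟩ := hh
      rw [mul_smul, hFinv _ γ.2]
    · have hmem : rep C ∈ (C : Set G) := by
        rw [hrep2 C]; exact ⟨1, by simp⟩
      exact le_iSup₂_of_le (rep C) hmem le_rfl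
  have hheckF : ∀ F : X → ℝ≥0∞, (∀ γ ∈ Γ, ∀ x : X, F (γ • x) = F x) →
      ∀ x : X, heckeT Γ g F x
        = ((RGamma Γ g : ℕ) : ℝ≥0∞)⁻¹ * ∑' C : ↥(rightCosetsIn Γ g), F (rep C • x) := by
    intro F hFinv x
    unfold heckeT
    congr 1
    exact tsum_congr fun C => hsupF F hFinv x C
  have main : ∀ F : X → ℝ≥0∞, Measurable F → (∀ γ ∈ Γ, ∀ x : X, F (γ • x) = F x) →
      ∫⁻ x in D ∩ T, F x ∂μ
        = c * ((RGamma Γ g : ℕ) : ℝ≥0∞) * ∫⁻ x in W₀, heckeT Γ g F x ∂μ := by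
    intro F hF hFinv
    have hsum : ∀ x : X, ∑' C : ↥(rightCosetsIn Γ g), F (rep C • x)
        = ((RGamma Γ g : ℕ) : ℝ≥0∞) * heckeT Γ g F x := by
      intro x
      rw [hheckF F hFinv x, ← mul_assoc, ENNReal.mul_inv_cancel hn0 hntop, one_mul]
    have hint : ∀ C : ↥(rightCosetsIn Γ g),
        ∫⁻ x in D ∩ WC C, F x ∂μ = c * ∫⁻ x in W₀, F (rep C • x) ∂μ := by
      intro C
      have e1 := lintegral_transversal_eq' hmeas hfree Γ μ Y hscΓ F hF hFinv (WC C) (hWCY C)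
        (D ∩ WC C) ((rep C • ·) '' W₀) (htransD C) (htransE C)
      have hscrep : ∀ A : Set X, MeasurableSet A → A ⊆ W₀ →
          μ ((rep C • ·) '' A) = c * μ A := by
        intro A hA hAW
        have h1 : A ⊆ Y := fun x hx => hW₀Y (hAW hx)
        have h2 : (rep C • ·) '' A ⊆ Y := by
          rintro x ⟨w, hw, rfl⟩
          have h5 := hrepY C 1 w (hAW hw)
          simpa using h5
        rw [hscale (rep C) A hA h1 h2]
        rw [hcdef]
        congr 2
        obtain ⟨γ₁, γ₂, hC⟩ := hrep1 C
        rw [hC, map_mul, map_mul, hNΓ _ γ₁.2, hNΓ _ γ₂.2, one_mul, mul_one]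
      have e2 := lintegral_image_smul' hmeas μ c (rep C) W₀ hW₀meas hscrep F hF
      rw [e1, e2]
    calc ∫⁻ x in D ∩ T, F x ∂μ
        = ∫⁻ x in ⋃ C : ↥(rightCosetsIn Γ g), (D ∩ WC C), F x ∂μ := by rw [hsetEq]
      _ = ∑' C : ↥(rightCosetsIn Γ g), ∫⁻ x in D ∩ WC C, F x ∂μ :=
          lintegral_iUnion (fun C => hD.1.inter (hWCmeas C)) hVdisj F
      _ = ∑' C : ↥(rightCosetsIn Γ g), c * ∫⁻ x in W₀, F (rep C • x) ∂μ :=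
          tsum_congr hint
      _ = c * ∑' C : ↥(rightCosetsIn Γ g), ∫⁻ x in W₀, F (rep C • x) ∂μ :=
          ENNReal.tsum_mul_left
      _ = c * ∫⁻ x in W₀, ∑' C : ↥(rightCosetsIn Γ g), F (rep C • x) ∂μ := by
          congr 1
          exact (lintegral_tsum fun C =>
            ((hF.comp (hmeas (rep C))).aemeasurable : AEMeasurable (fun x => F (rep C • x)) _)).symm
      _ = c * ∫⁻ x in W₀, ((RGamma Γ g : ℕ) : ℝ≥0∞) * heckeT Γ g F x ∂μ := by
          rw [lintegral_congr fun x => hsum x]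
      _ = c * (((RGamma Γ g : ℕ) : ℝ≥0∞) * ∫⁻ x in W₀, heckeT Γ g F x ∂μ) := by
          rw [lintegral_const_mul' _ _ hntop]
      _ = c * ((RGamma Γ g : ℕ) : ℝ≥0∞) * ∫⁻ x in W₀, heckeT Γ g F x ∂μ := by
          rw [mul_assoc]
  refine ⟨main f hf hfinv, ?_⟩
  have hone : ∀ γ ∈ Γ, ∀ x : X, (fun _ : X => (1 : ℝ≥0∞)) (γ • x) = (fun _ : X => (1 : ℝ≥0∞)) x :=
    fun _ _ _ => rfl
  have h1 := main (fun _ => 1) measurable_const hone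
  have hcount : ∑' _ : ↥(rightCosetsIn Γ g), (1 : ℝ≥0∞) = ((RGamma Γ g : ℕ) : ℝ≥0∞) := by
    rw [tsum_fintype]
    simp only [Finset.sum_const, Finset.card_univ, nsmul_eq_mul, mul_one]
    congr 1
    unfold RGamma
    rw [Nat.card_eq_fintype_card]
  have hheck1 : ∀ x : X, heckeT Γ g (fun _ => (1 : ℝ≥0∞)) x = 1 := by
    intro x
    rw [hheckF (fun _ => 1) hone x, hcount, ENNReal.inv_mul_cancel hn0 hntop]
  rw [setLIntegral_one] at h1
  calc μ (D ∩ T) = ∫⁻ x in D ∩ T, 1 ∂μ := (setLIntegral_one _).symm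
    _ = c * ((RGamma Γ g : ℕ) : ℝ≥0∞) * ∫⁻ x in W₀, heckeT Γ g (fun _ => 1) x ∂μ :=
        main (fun _ => 1) measurable_const hone
    _ = c * ((RGamma Γ g : ℕ) : ℝ≥0∞) * μ W₀ := by
        rw [(lintegral_congr fun x => hheck1 x : (∫⁻ x in W₀, heckeT Γ g (fun _ => 1) x ∂μ)
          = ∫⁻ x in W₀, 1 ∂μ), setLIntegral_one]
end
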